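/- arXiv:2405.09500 — 9 statements merged into one kernel-verified Lean document; each statement's English description precedes it below -/
import Mathlib

section
/- For convex capacities ν and ν' on a finite set X and α ∈ [0,1], the core of the mixture αν + (1-α)ν' equals the Minkowski mixture α·core(ν) + (1-α)·core(ν'). -/
/-!
Frank's discrete sandwich theorem: if `g ≤ f` with `g` supermodular and `f` submodular, some
modular function `K ↦ c + ∑ a ∈ K, w a` lies between them. By induction on the ground set: the
weight `t` of a new point `x` fits between every `g (insert x K) - f K` and every
`f (insert x K') - g K'`, and the remaining points are handled by the sandwich
`max (g K) (g (insert x K) - t) ≤ min (f K) (f (insert x K) - t)`.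

If `r` lies in the core of `α ν + (1 - α) ν'`, the sandwich `α ν ≤ r - (1 - α) ν'` yields a
measure `w` with `α ν ≤ w` and `(1 - α) ν' ≤ r - w`, so `w / α` and `(r - w) / (1 - α)` lie in
the two cores. For `α ∈ {0, 1}` one only needs the core of a convex capacity to be nonempty,
which is the sandwich between `ν` and the indicator of nonempty sets.
-/

open Finset

variable {X : Type*} [Fintype X] [DecidableEq X]

/-- Total mass of `p` on a finite subset `K`. -/
def mass (p : X → ℝ) (K : Finset X) : ℝ := ∑ a ∈ K, p a

/-- `p` is a probability mass function on `X`. -/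
def IsProb (p : X → ℝ) : Prop := (∀ a, 0 ≤ p a) ∧ ∑ a, p a = 1

/-- A capacity on the finite set `X`: normalized and monotone set function. -/
def IsCapacity (ν : Finset X → ℝ) : Prop :=
  ν ∅ = 0 ∧ ν Finset.univ = 1 ∧ ∀ ⦃A B : Finset X⦄, A ⊆ B → ν A ≤ ν B

/-- A convex (supermodular) capacity. -/
def IsConvexCap (ν : Finset X → ℝ) : Prop :=
  IsCapacity ν ∧ ∀ A B : Finset X, ν A + ν B ≤ ν (A ∪ B) + ν (A ∩ B)

/-- The core of a capacity: all dominating probability measures. -/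
def core (ν : Finset X → ℝ) : Set (X → ℝ) :=
  {p | IsProb p ∧ ∀ K : Finset X, ν K ≤ mass p K}

section Sandwich

variable {ι : Type*} [DecidableEq ι]

def SubmodularOn (S : Finset ι) (f : Finset ι → ℝ) : Prop :=
  ∀ ⦃A B⦄, A ⊆ S → B ⊆ S → f (A ∪ B) + f (A ∩ B) ≤ f A + f B

variable {S : Finset ι} {x : ι} {f g : Finset ι → ℝ}

theorem SubmodularOn.min_insert_sub (hf : SubmodularOn (insert x S) f) (hx : x ∉ S) (t : ℝ) :
    SubmodularOn S fun K => min (f K) (f (insert x K) - t) := by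
  intro A B hA hB
  have hxA : x ∉ A := fun h => hx (hA h)
  have hxB : x ∉ B := fun h => hx (hB h)
  have hA' := hA.trans (subset_insert x S)
  have hB' := hB.trans (subset_insert x S)
  have hAx := insert_subset_insert x hA
  have hBx := insert_subset_insert x hB
  have h₁ := hf hA' hB'
  have h₂ := hf hA' hBx
  have h₃ := hf hAx hB'
  have h₄ := hf hAx hBx
  rw [union_insert, inter_insert_of_notMem hxA] at h₂
  rw [insert_union, insert_inter_of_notMem hxB] at h₃
  rw [← insert_union_distrib, ← insert_inter_distrib] at h₄
  have := min_le_left (f (A ∪ B)) (f (insert x (A ∪ B)) - t)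
  have := min_le_right (f (A ∪ B)) (f (insert x (A ∪ B)) - t)
  have := min_le_left (f (A ∩ B)) (f (insert x (A ∩ B)) - t)
  have := min_le_right (f (A ∩ B)) (f (insert x (A ∩ B)) - t)
  rcases min_cases (f A) (f (insert x A) - t) with ⟨hFA, -⟩ | ⟨hFA, -⟩ <;>
    rcases min_cases (f B) (f (insert x B) - t) with ⟨hFB, -⟩ | ⟨hFB, -⟩ <;>
    linarith

theorem sub_le_sub_of_sandwich_insert (hf : SubmodularOn (insert x S) f)
    (hg : SubmodularOn (insert x S) (-g)) (hgf : ∀ K ⊆ insert x S, g K ≤ f K) (hx : x ∉ S)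
    {K K' : Finset ι} (hK : K ⊆ S) (hK' : K' ⊆ S) :
    g (insert x K) - f K ≤ f (insert x K') - g K' := by
  have hxK : x ∉ K := fun h => hx (hK h)
  have hxK' : x ∉ K' := fun h => hx (hK' h)
  have hgsup := hg (insert_subset_insert x hK) (hK'.trans (subset_insert x S))
  have hfsub := hf (hK.trans (subset_insert x S)) (insert_subset_insert x hK')
  rw [insert_union, insert_inter_of_notMem hxK'] at hgsup
  rw [union_insert, inter_insert_of_notMem hxK] at hfsub
  have := hgf _ (insert_subset_insert x (union_subset hK hK'))
  have := hgf (K ∩ K') ((inter_subset_left.trans hK).trans (subset_insert x S))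
  simp only [Pi.neg_apply] at hgsup
  linarith

theorem exists_modular_between (S : Finset ι) (hf : SubmodularOn S f) (hg : SubmodularOn S (-g))
    (hgf : ∀ K ⊆ S, g K ≤ f K) :
    ∃ (c : ℝ) (w : ι → ℝ), ∀ K ⊆ S, g K ≤ c + ∑ a ∈ K, w a ∧ c + ∑ a ∈ K, w a ≤ f K := by
  induction S using Finset.induction_on generalizing f g with
  | empty =>
    refine ⟨g ∅, 0, fun K hK => ?_⟩
    rw [subset_empty.mp hK]
    simpa using hgf ∅ subset_rfl
  | @insert x S hx ih =>
    set t := S.powerset.inf' ⟨∅, empty_mem_powerset S⟩ fun K => f (insert x K) - g K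
    have ht_le : ∀ K ⊆ S, t ≤ f (insert x K) - g K := fun K hK =>
      inf'_le _ (mem_powerset.mpr hK)
    have le_ht : ∀ K ⊆ S, g (insert x K) - f K ≤ t := fun K hK =>
      le_inf' _ _ fun K' hK' =>
        sub_le_sub_of_sandwich_insert hf hg hgf hx hK (mem_powerset.mp hK')
    set F : Finset ι → ℝ := fun K => min (f K) (f (insert x K) - t)
    set G : Finset ι → ℝ := fun K => max (g K) (g (insert x K) - t)
    have hG : SubmodularOn S (-G) := by
      convert hg.min_insert_sub hx (-t) using 1
      funext K
      simp only [G, Pi.neg_apply, ← min_neg_neg, neg_sub', sub_neg_eq_add]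
    have hGF : ∀ K ⊆ S, G K ≤ F K := fun K hK => by
      have := hgf K (hK.trans (subset_insert x S))
      have := hgf _ (insert_subset_insert x hK)
      have := ht_le K hK
      have := le_ht K hK
      exact max_le (le_min (by linarith) (by linarith)) (le_min (by linarith) (by linarith))
    obtain ⟨c, w, hw⟩ := ih (hf.min_insert_sub hx t) hG hGF
    refine ⟨c, Function.update w x t, fun K hK => ?_⟩
    rw [← mem_powerset, powerset_insert, mem_union, mem_image] at hK
    rcases hK with hK | ⟨K, hK, rfl⟩ <;> rw [mem_powerset] at hK <;>
      have hxK : x ∉ K := fun h => hx (hK h)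
    · rw [sum_update_of_notMem hxK]
      have := le_max_left (g K) (g (insert x K) - t)
      have := min_le_left (f K) (f (insert x K) - t)
      have := hw K hK
      constructor <;> linarith
    · rw [sum_insert hxK, sum_update_of_notMem hxK, Function.update_self]
      have := le_max_right (g K) (g (insert x K) - t)
      have := min_le_right (f K) (f (insert x K) - t)
      have := hw K hK
      constructor <;> linarith

end Sandwich

section Capacity

variable {ι : Type*} [Fintype ι] {ν ν' : Finset ι → ℝ}

theorem IsCapacity.nonneg (hν : IsCapacity ν) (K : Finset ι) : 0 ≤ ν K :=
  hν.1 ▸ hν.2.2 (empty_subset K)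

theorem IsConvexCap.submodularOn_neg [DecidableEq ι] (hν : IsConvexCap ν) :
    SubmodularOn univ (-ν) :=
  fun A B _ _ => by simp only [Pi.neg_apply]; linarith [hν.2 A B]

theorem exists_mass_between [DecidableEq ι] {f g : Finset ι → ℝ} (hf : SubmodularOn univ f)
    (hg : SubmodularOn univ (-g)) (hgf : ∀ K, g K ≤ f K) (hf0 : f ∅ = 0) (hg0 : g ∅ = 0) :
    ∃ w : ι → ℝ, ∀ K, g K ≤ mass w K ∧ mass w K ≤ f K := by
  obtain ⟨c, w, hw⟩ := exists_modular_between univ hf hg fun K _ => hgf K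
  have hc : c = 0 := by
    have := hw ∅ (empty_subset _)
    simp only [hf0, hg0, sum_empty, add_zero] at this
    exact le_antisymm this.2 this.1
  exact ⟨w, fun K => by simpa [hc, mass] using hw K (subset_univ K)⟩

theorem mem_core_of_le_mass {p : ι → ℝ} (hν : IsCapacity ν) (hle : ∀ K, ν K ≤ mass p K)
    (huniv : mass p univ ≤ 1) : p ∈ core ν :=
  ⟨⟨fun a => by simpa [mass] using (hν.nonneg {a}).trans (hle {a}),
    le_antisymm huniv (hν.2.1 ▸ hle univ)⟩, hle⟩

theorem div_mem_core {w : ι → ℝ} {c : ℝ} (hν : IsCapacity ν) (hc : 0 < c)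
    (hle : ∀ K, c * ν K ≤ mass w K) (huniv : mass w univ ≤ c) :
    (fun a => w a / c) ∈ core ν := by
  have hmass : ∀ K, mass (fun a => w a / c) K = mass w K / c := fun K => (sum_div ..).symm
  refine mem_core_of_le_mass hν (fun K => ?_) ?_ <;> rw [hmass]
  · rw [le_div_iff₀ hc, mul_comm]
    exact hle K
  · rwa [div_le_one hc]

theorem IsConvexCap.core_nonempty [DecidableEq ι] (hν : IsConvexCap ν) : (core ν).Nonempty := by
  have huniv : (univ : Finset ι) ≠ ∅ := fun h => by
    simpa [h, hν.1.1] using hν.1.2.1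
  let f : Finset ι → ℝ := fun K => if K = ∅ then 0 else 1
  have hf : SubmodularOn univ f := fun A B _ _ => by
    by_cases hA : A = ∅
    · simp [f, hA]
    by_cases hB : B = ∅
    · simp [f, hB]
    have hAB : A ∪ B ≠ ∅ := fun h => hA (union_eq_empty.mp h).1
    simp only [f, if_neg hA, if_neg hB, if_neg hAB]
    split_ifs <;> norm_num
  have hνf : ∀ K, ν K ≤ f K := fun K => by
    simp only [f]
    split_ifs with hK
    · rw [hK, hν.1.1]
    · exact hν.1.2.1 ▸ hν.1.2.2 (subset_univ K)
  obtain ⟨w, hw⟩ := exists_mass_between hf hν.submodularOn_neg hνf (by simp [f]) hν.1.1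
  refine ⟨w, mem_core_of_le_mass hν.1 (fun K => (hw K).1) ?_⟩
  simpa [f, huniv] using (hw univ).2

theorem mix_mem_core_mix {α : ℝ} (hα : α ∈ Set.Icc (0 : ℝ) 1) {p q : ι → ℝ}
    (hp : p ∈ core ν) (hq : q ∈ core ν') :
    (fun a => α * p a + (1 - α) * q a) ∈ core fun K => α * ν K + (1 - α) * ν' K := by
  obtain ⟨⟨hp0, hp1⟩, hpK⟩ := hp
  obtain ⟨⟨hq0, hq1⟩, hqK⟩ := hq
  have hβ : 0 ≤ 1 - α := sub_nonneg.mpr hα.2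
  have hmass : ∀ K, mass (fun a => α * p a + (1 - α) * q a) K =
      α * mass p K + (1 - α) * mass q K := fun K => by
    simp only [mass, sum_add_distrib, mul_sum]
  refine ⟨⟨fun a => add_nonneg (mul_nonneg hα.1 (hp0 a)) (mul_nonneg hβ (hq0 a)), ?_⟩,
    fun K => ?_⟩
  · have := hmass univ
    simp only [mass] at this
    rw [this, hp1, hq1]
    ring
  · rw [hmass]
    linarith [mul_le_mul_of_nonneg_left (hpK K) hα.1, mul_le_mul_of_nonneg_left (hqK K) hβ]

theorem exists_eq_mix_of_mem_core_mix_of_mem_Ioo [DecidableEq ι] (hν : IsConvexCap ν)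
    (hν' : IsConvexCap ν') {α : ℝ} (hα : α ∈ Set.Ioo (0 : ℝ) 1) {r : ι → ℝ}
    (hr : r ∈ core fun K => α * ν K + (1 - α) * ν' K) :
    ∃ p ∈ core ν, ∃ q ∈ core ν', r = fun a => α * p a + (1 - α) * q a := by
  obtain ⟨⟨-, hr1⟩, hrK⟩ := hr
  have hβ : 0 < 1 - α := sub_pos.mpr hα.2
  have hf : SubmodularOn univ fun K => mass r K - (1 - α) * ν' K := fun A B _ _ => by
    simp only [mass]
    linarith [sum_union_inter (s₁ := A) (s₂ := B) (f := r),
      mul_le_mul_of_nonneg_left (hν'.2 A B) hβ.le]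
  have hg : SubmodularOn univ (-fun K => α * ν K) := fun A B _ _ => by
    simp only [Pi.neg_apply]
    linarith [mul_le_mul_of_nonneg_left (hν.2 A B) hα.1.le]
  obtain ⟨w, hw⟩ := exists_mass_between hf hg (fun K => by linarith [hrK K])
    (by simp [mass, hν'.1.1]) (by simp [hν.1.1])
  have hmass : ∀ K, mass (fun a => r a - w a) K = mass r K - mass w K :=
    fun K => sum_sub_distrib ..
  have hw1 : α ≤ mass w univ := by simpa [hν.1.2.1] using (hw univ).1
  have hw2 : mass w univ ≤ α := by
    have := (hw univ).2
    rw [hν'.1.2.1, show mass r univ = 1 from hr1] at this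
    linarith
  refine ⟨_, div_mem_core hν.1 hα.1 (fun K => (hw K).1) hw2, _,
    div_mem_core (w := fun a => r a - w a) hν'.1 hβ (fun K => ?_) ?_, ?_⟩
  · rw [hmass]
    linarith [(hw K).2]
  · rw [hmass, show mass r univ = 1 from hr1]
    linarith
  · funext a
    rw [mul_div_cancel₀ _ hα.1.ne', mul_div_cancel₀ _ hβ.ne']
    ring

theorem exists_eq_mix_of_mem_core_mix [DecidableEq ι] (hν : IsConvexCap ν)
    (hν' : IsConvexCap ν') {α : ℝ} (hα : α ∈ Set.Icc (0 : ℝ) 1) {r : ι → ℝ}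
    (hr : r ∈ core fun K => α * ν K + (1 - α) * ν' K) :
    ∃ p ∈ core ν, ∃ q ∈ core ν', r = fun a => α * p a + (1 - α) * q a := by
  rcases hα.1.eq_or_lt with rfl | hα0
  · obtain ⟨p, hp⟩ := hν.core_nonempty
    exact ⟨p, hp, r, by simpa using hr, by simp⟩
  rcases hα.2.eq_or_lt with rfl | hα1
  · obtain ⟨q, hq⟩ := hν'.core_nonempty
    exact ⟨r, by simpa using hr, q, hq, by simp⟩
  exact exists_eq_mix_of_mem_core_mix_of_mem_Ioo hν hν' ⟨hα0, hα1⟩ hr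

end Capacity

/-- The core of a mixture of convex capacities equals the mixture of the cores. -/
theorem stmt0 (ν ν' : Finset X → ℝ) (hν : IsConvexCap ν) (hν' : IsConvexCap ν')
    (α : ℝ) (hα : α ∈ Set.Icc (0:ℝ) 1) :
    core (fun K => α * ν K + (1 - α) * ν' K) =
      {r | ∃ p ∈ core ν, ∃ q ∈ core ν', r = fun a => α * p a + (1 - α) * q a} := by
  ext r
  exact ⟨exists_eq_mix_of_mem_core_mix hν hν' hα,
    fun ⟨p, hp, q, hq, hr⟩ => hr ▸ mix_mem_core_mix hα hp hq⟩
end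

section
/- If ν is a convex capacity on a finite set X, then its core is nonempty. -/
open Finset

variable {X : Type*} [Fintype X] [DecidableEq X]

/-- Shapley's greedy construction: adding the points of `S` one at a time, give each point
the marginal value `ν (insert x T) - ν T` of the set `T` it is added to; supermodularity for `K`
and `T` gives `ν K ≤ (ν (insert x T) - ν T) + ν (K.erase x)` whenever `x ∈ K ⊆ insert x T`,
so these weights dominate `ν` on every subset of `S`. -/
theorem exists_nonneg_sum_eq_of_supermodular {α : Type*} [DecidableEq α] {ν : Finset α → ℝ}
    (hν₀ : ν ∅ = 0) (hmono : Monotone ν)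
    (hsup : ∀ A B : Finset α, ν A + ν B ≤ ν (A ∪ B) + ν (A ∩ B)) (S : Finset α) :
    ∃ p : α → ℝ, (∀ a, 0 ≤ p a) ∧ ∑ a ∈ S, p a = ν S ∧ ∀ K ⊆ S, ν K ≤ ∑ a ∈ K, p a := by
  induction S using Finset.induction_on with
  | empty =>
    exact ⟨0, fun _ => le_rfl, by simp [hν₀], fun K hK => by simp [subset_empty.1 hK, hν₀]⟩
  | insert x T hxT ih =>
    obtain ⟨p, hp_nonneg, hp_sum, hp_dom⟩ := ih
    refine ⟨Function.update p x (ν (insert x T) - ν T), fun a => ?_, ?_, fun K hK => ?_⟩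
    · rcases eq_or_ne a x with rfl | hax
      · simpa using hmono (subset_insert a T)
      · simpa [hax] using hp_nonneg a
    · rw [sum_insert hxT, sum_update_of_notMem hxT, hp_sum, Function.update_self]
      ring
    · by_cases hxK : x ∈ K
      · have hunion : K ∪ T = insert x T :=
          (union_subset hK (subset_insert x T)).antisymm
            (insert_subset (mem_union_left T hxK) subset_union_right)
        have hinter : K ∩ T = K.erase x := by
          ext a
          have := @hK a
          grind
        have hsupKT := hsup K T
        have hdom := hp_dom (K.erase x) (hinter ▸ inter_subset_right)
        rw [hunion, hinter] at hsupKT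
        rw [← add_sum_erase K _ hxK, sum_update_of_notMem (notMem_erase x K),
          Function.update_self]
        linarith
      · rw [sum_update_of_notMem hxK]
        exact hp_dom K ((subset_insert_iff_of_notMem hxK).1 hK)

/-- A convex capacity has nonempty core. -/
theorem stmt2 (ν : Finset X → ℝ) (hν : IsConvexCap ν) : (core ν).Nonempty := by
  obtain ⟨⟨hν₀, hν₁, hmono⟩, hsup⟩ := hν
  obtain ⟨p, hp_nonneg, hp_sum, hp_dom⟩ :=
    exists_nonneg_sum_eq_of_supermodular hν₀ (fun _ _ h => hmono h) hsup univ
  exact ⟨p, ⟨hp_nonneg, hp_sum.trans hν₁⟩, fun K => hp_dom K (subset_univ K)⟩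
end

section
/- If ν is a convex capacity on a finite set X, then for every K ⊆ X, ν(K) = min{p(K) : p ∈ core(ν)}; that is, ν is the lower envelope of its core. -/
open Finset

variable {X : Type*} [Fintype X] [DecidableEq X]

/-! Shapley's greedy construction. Order `X` by an injective `σ` and give each `x` the marginal gain
`ν (P ∪ {x}) - ν P`, where `P` is the set of its predecessors. These masses telescope to `ν` on
every initial segment, and since supermodularity makes marginal gains grow with the set they are
added to, they dominate `ν` on every set: the marginal vector lies in the core. Listing the
elements of `K` first makes `K` an initial segment, so the bound `ν K` is attained. -/

omit [Fintype X] in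
lemma sub_le_sub_insert_of_supermodular {ν : Finset X → ℝ}
    (hconv : ∀ A B : Finset X, ν A + ν B ≤ ν (A ∪ B) + ν (A ∩ B))
    {x : X} {T S : Finset X} (hTS : T ⊆ S) (hx : x ∉ S) :
    ν (insert x T) - ν T ≤ ν (insert x S) - ν S := by
  have h := hconv (insert x T) S
  rw [insert_union, union_eq_right.2 hTS, insert_inter_of_notMem hx,
    inter_eq_left.2 hTS] at h
  linarith

section MarginalVector

variable {α : Type*} [LinearOrder α]

def predSet (σ : X → α) (x : X) : Finset X := {y | σ y < σ x}

def marginalVector (ν : Finset X → ℝ) (σ : X → α) (x : X) : ℝ :=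
  ν (insert x (predSet σ x)) - ν (predSet σ x)

omit [DecidableEq X] in
lemma mem_predSet {σ : X → α} {x y : X} : y ∈ predSet σ x ↔ σ y < σ x := by
  simp [predSet]

omit [DecidableEq X] in
lemma self_notMem_predSet (σ : X → α) (x : X) : x ∉ predSet σ x := by
  simp [mem_predSet]

omit [DecidableEq X] in
lemma subset_predSet_of_le {σ : X → α} (hσ : Function.Injective σ) {a : X} {s : Finset X}
    (ha : a ∉ s) (hle : ∀ x ∈ s, σ x ≤ σ a) : s ⊆ predSet σ a := fun x hx =>
  mem_predSet.2 <| (hle x hx).lt_of_ne fun h => ha (hσ h ▸ hx)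

lemma marginalVector_nonneg {ν : Finset X → ℝ} (hmono : ∀ ⦃A B : Finset X⦄, A ⊆ B → ν A ≤ ν B)
    (σ : X → α) (x : X) : 0 ≤ marginalVector ν σ x :=
  sub_nonneg.2 <| hmono <| subset_insert _ _

lemma le_mass_marginalVector {ν : Finset X → ℝ} (hempty : ν ∅ = 0)
    (hconv : ∀ A B : Finset X, ν A + ν B ≤ ν (A ∪ B) + ν (A ∩ B))
    {σ : X → α} (hσ : Function.Injective σ) (A : Finset X) :
    ν A ≤ mass (marginalVector ν σ) A := by
  induction A using Finset.induction_on_max_value σ with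
  | empty => simp [mass, hempty]
  | insert a s ha hle ih =>
    have hgain := sub_le_sub_insert_of_supermodular hconv (subset_predSet_of_le hσ ha hle)
      (self_notMem_predSet σ a)
    calc ν (insert a s) ≤ marginalVector ν σ a + ν s := by rw [marginalVector]; linarith
      _ ≤ mass (marginalVector ν σ) (insert a s) := by rw [mass, sum_insert ha, ← mass]; linarith

lemma mass_marginalVector_of_lowerSet {ν : Finset X → ℝ} (hempty : ν ∅ = 0)
    {σ : X → α} (hσ : Function.Injective σ) {D : Finset X}
    (hD : ∀ x ∈ D, ∀ y, σ y < σ x → y ∈ D) :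
    mass (marginalVector ν σ) D = ν D := by
  induction D using Finset.induction_on_max_value σ with
  | empty => simp [mass, hempty]
  | insert a s ha hle ih =>
    have hs : s = predSet σ a := by
      refine (subset_predSet_of_le hσ ha hle).antisymm fun y hy => ?_
      have hya := mem_predSet.1 hy
      exact (mem_insert.1 (hD a (mem_insert_self a s) y hya)).resolve_left (ne_of_apply_ne σ hya.ne)
    have hs_lower : ∀ x ∈ s, ∀ y, σ y < σ x → y ∈ s := fun x hx y hyx => by
      rw [hs, mem_predSet] at hx ⊢
      exact hyx.trans hx
    rw [mass, sum_insert ha, ← mass, ih hs_lower, marginalVector, ← hs]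
    ring

lemma marginalVector_mem_core {ν : Finset X → ℝ} (hν : IsConvexCap ν)
    {σ : X → α} (hσ : Function.Injective σ) : marginalVector ν σ ∈ core ν := by
  obtain ⟨⟨hempty, huniv, hmono⟩, hconv⟩ := hν
  refine ⟨⟨marginalVector_nonneg hmono σ, ?_⟩, le_mass_marginalVector hempty hconv hσ⟩
  rw [← huniv, ← mass_marginalVector_of_lowerSet hempty hσ fun _ _ y _ => mem_univ y]
  rfl

end MarginalVector

lemma exists_injective_lowerSet (K : Finset X) :
    ∃ σ : X → ℕ ×ₗ Fin (Fintype.card X), Function.Injective σ ∧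
      ∀ x ∈ K, ∀ y, σ y < σ x → y ∈ K := by
  refine ⟨fun x => toLex (if x ∈ K then 0 else 1, Fintype.equivFin X x), fun x y h => ?_, ?_⟩
  · exact (Fintype.equivFin X).injective (Prod.ext_iff.1 (toLex.injective h)).2
  · intro x hx y hyx
    by_contra hy
    simp [Prod.Lex.toLex_lt_toLex, hx, hy] at hyx

/-- A convex capacity is the lower envelope of its core: the infimum is attained. -/
theorem stmt3 (ν : Finset X → ℝ) (hν : IsConvexCap ν) (K : Finset X) :
    IsLeast {r : ℝ | ∃ p ∈ core ν, r = mass p K} (ν K) := by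
  obtain ⟨σ, hσ, hK⟩ := exists_injective_lowerSet K
  refine ⟨⟨marginalVector ν σ, marginalVector_mem_core hν hσ, ?_⟩, ?_⟩
  · exact (mass_marginalVector_of_lowerSet hν.1.1 hσ hK).symm
  · rintro r ⟨p, hp, rfl⟩
    exact hp.2 K
end

section
/- Let 𝒟 be a finite set, X a finite set, and for each d ∈ 𝒟 let ν_d be a convex capacity on a subset C_d ⊆ X (extended to X by ν_d(K) = ν_d(K ∩ C_d)) with ℛ_d = core(ν_d). Let λ be a probability measure on X and Q a probability measure on 𝒟. Then there exist ρ_d ∈ ℛ_d for each d with λ(a) = Σ_d Q(d)ρ_d(a) for all a ∈ X, if and only if λ(K) ≥ Σ_d Q(d)ν_d(K ∩ C_d) for all K ⊆ X. -/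
open Finset

variable {X : Type*} [Fintype X] [DecidableEq X]

/-!
The core of a convex capacity `ν` is the convex hull of its marginal vectors
`a ↦ ν (P ∪ {a}) - ν P`, where `P` is the set of predecessors of `a` in an ordering of `X`
(Shapley–Ichiishi). Supermodularity puts every marginal vector in the core; conversely, a linear
functional `p ↦ ∑ c a * p a` is maximised on the core by the marginal vector of an ordering along
which `c` increases (Abel summation against the nonnegative deficits `p P - ν P`), so no point of
the core can be separated from the hull. Marginal vectors are linear in the capacity, so those of
`∑ Q d • ν d` are `Q`-mixtures of those of the `ν d`, and the core of the mixture is the mixture of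
the cores. The inequalities of the theorem say exactly that `λ` lies in the core of the mixture.
-/

section Ordering

omit [DecidableEq X]

variable (g : Fin (Fintype.card X) ≃ X)

def prefixSet (i : ℕ) : Finset X :=
  univ.filter fun a => (g.symm a : ℕ) < i

def marginal (ν : Finset X → ℝ) (a : X) : ℝ :=
  ν (prefixSet g (g.symm a + 1)) - ν (prefixSet g (g.symm a))

@[simp]
lemma mem_prefixSet {a : X} {i : ℕ} : a ∈ prefixSet g i ↔ (g.symm a : ℕ) < i := by
  simp [prefixSet]

lemma prefixSet_zero : prefixSet g 0 = ∅ := by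
  ext; simp

lemma prefixSet_of_card_le {i : ℕ} (h : Fintype.card X ≤ i) : prefixSet g i = univ := by
  ext a; simpa using (g.symm a).2.trans_le h

lemma prefixSet_succ [DecidableEq X] (i : Fin (Fintype.card X)) :
    prefixSet g (i + 1) = insert (g i) (prefixSet g i) := by
  ext a
  rw [mem_insert, mem_prefixSet, mem_prefixSet, Nat.lt_succ_iff_lt_or_eq, ← Fin.ext_iff,
    ← Equiv.symm_apply_eq, or_comm]

lemma apply_notMem_prefixSet (i : Fin (Fintype.card X)) : g i ∉ prefixSet g i := by
  simp

lemma marginal_apply (ν : Finset X → ℝ) (i : Fin (Fintype.card X)) :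
    marginal g ν (g i) = ν (prefixSet g (i + 1)) - ν (prefixSet g i) := by
  simp [marginal]

theorem prefixSet_induction [DecidableEq X] {F : Finset X → Prop} (h0 : F ∅)
    (hstep : ∀ i : Fin (Fintype.card X), F (prefixSet g i) → F (insert (g i) (prefixSet g i)))
    (k : ℕ) : F (prefixSet g k) := by
  induction k with
  | zero => rwa [prefixSet_zero]
  | succ k ih =>
    rcases lt_or_ge k (Fintype.card X) with hk | hk
    · simpa only [prefixSet_succ g ⟨k, hk⟩] using hstep ⟨k, hk⟩ ih
    · rwa [prefixSet_of_card_le g (hk.trans k.le_succ), ← prefixSet_of_card_le g hk]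

lemma exists_monotone_comp (c : X → ℝ) : ∃ g : Fin (Fintype.card X) ≃ X, Monotone (c ∘ g) :=
  let e := (Fintype.equivFin X).symm
  ⟨(Tuple.sort (c ∘ e)).trans e, Tuple.monotone_sort (c ∘ e)⟩

end Ordering

omit [Fintype X] in
lemma insert_sub_le_insert_sub_of_supermodular {ν : Finset X → ℝ}
    (hν : ∀ A B : Finset X, ν A + ν B ≤ ν (A ∪ B) + ν (A ∩ B)) {A B : Finset X} {b : X}
    (hAB : A ⊆ B) (hb : b ∉ B) :
    ν (insert b A) - ν A ≤ ν (insert b B) - ν B := by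
  have h := hν (insert b A) B
  rw [insert_union, union_eq_right.2 hAB, insert_inter_of_notMem hb, inter_eq_left.2 hAB] at h
  linarith

omit [Fintype X] in
lemma mass_insert (p : X → ℝ) {S : Finset X} {b : X} (hb : b ∉ S) :
    mass p (insert b S) = p b + mass p S :=
  sum_insert hb

omit [Fintype X] [DecidableEq X] in
lemma mass_sub (p q : X → ℝ) (S : Finset X) : mass (p - q) S = mass p S - mass q S :=
  sum_sub_distrib ..

lemma mass_marginal_prefixSet (g : Fin (Fintype.card X) ≃ X) (ν : Finset X → ℝ) (k : ℕ) :
    mass (marginal g ν) (prefixSet g k) = ν (prefixSet g k) - ν ∅ := by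
  refine prefixSet_induction g (F := fun S => mass (marginal g ν) S = ν S - ν ∅) (by simp [mass])
    (fun i ih => ?_) k
  rw [mass_insert _ (apply_notMem_prefixSet g i), ih, marginal_apply, prefixSet_succ]
  ring

omit [DecidableEq X] in
lemma convex_core (ν : Finset X → ℝ) : Convex ℝ (core ν) := by
  intro p hp q hq s t hs ht hst
  have hmass : ∀ K, mass (s • p + t • q) K = s * mass p K + t * mass q K := fun K => by
    simp only [mass, Pi.add_apply, Pi.smul_apply, smul_eq_mul, sum_add_distrib, mul_sum]
  refine ⟨⟨fun a => ?_, ?_⟩, fun K => ?_⟩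
  · have := hp.1.1 a; have := hq.1.1 a
    simp only [Pi.add_apply, Pi.smul_apply, smul_eq_mul]; positivity
  · have h := hmass univ
    rwa [show mass p univ = 1 from hp.1.2, show mass q univ = 1 from hq.1.2, mul_one, mul_one,
      hst] at h
  · calc ν K = s * ν K + t * ν K := by rw [← add_mul, hst, one_mul]
      _ ≤ mass (s • p + t • q) K := by rw [hmass]; gcongr <;> exact (‹_ ∈ core ν›).2 K

lemma sum_mul_nonpos_of_monotone (g : Fin (Fintype.card X) ≃ X) {c x : X → ℝ}
    (hc : Monotone (c ∘ g)) (hx : ∀ k, 0 ≤ mass x (prefixSet g k)) (hx0 : ∑ a, x a = 0) :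
    ∑ a, c a * x a ≤ 0 := by
  -- Abel summation, run against any upper bound `t` of `c` so that it also closes at the last index
  have key : ∀ k t, (∀ a ∈ prefixSet g k, c a ≤ t) →
      ∑ a ∈ prefixSet g k, c a * x a ≤ t * mass x (prefixSet g k) := by
    refine prefixSet_induction g (F := fun S => ∀ t, (∀ a ∈ S, c a ≤ t) →
      ∑ a ∈ S, c a * x a ≤ t * mass x S) (by simp [mass]) fun i ih t ht => ?_
    have hle : ∀ a ∈ prefixSet g i, c a ≤ c (g i) := fun a ha => by
      simpa using hc ((mem_prefixSet g).1 ha).le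
    have hnn : 0 ≤ mass x (insert (g i) (prefixSet g i)) := prefixSet_succ g i ▸ hx (i + 1)
    calc ∑ a ∈ insert (g i) (prefixSet g i), c a * x a
        = c (g i) * x (g i) + ∑ a ∈ prefixSet g i, c a * x a :=
          sum_insert (apply_notMem_prefixSet g i)
      _ ≤ c (g i) * mass x (insert (g i) (prefixSet g i)) := by
          rw [mass_insert _ (apply_notMem_prefixSet g i)]; linarith [ih _ hle]
      _ ≤ t * mass x (insert (g i) (prefixSet g i)) :=
          mul_le_mul_of_nonneg_right (ht _ (mem_insert_self _ _)) hnn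
  obtain ⟨t, ht⟩ := (Set.finite_range c).bddAbove
  simpa [prefixSet_of_card_le g le_rfl, mass, hx0] using
    key (Fintype.card X) t fun a _ => ht ⟨a, rfl⟩

namespace IsConvexCap

variable {ν : Finset X → ℝ} (hν : IsConvexCap ν) (g : Fin (Fintype.card X) ≃ X)
include hν

lemma le_mass_marginal_inter_prefixSet (K : Finset X) (k : ℕ) :
    ν (K ∩ prefixSet g k) ≤ mass (marginal g ν) (K ∩ prefixSet g k) := by
  refine prefixSet_induction g (F := fun S => ν (K ∩ S) ≤ mass (marginal g ν) (K ∩ S))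
    (by simp [hν.1.1, mass]) (fun i ih => ?_) k
  by_cases hK : g i ∈ K
  · have hgain := insert_sub_le_insert_sub_of_supermodular hν.2 inter_subset_right
      (apply_notMem_prefixSet g i) (A := K ∩ prefixSet g i)
    have hnot : g i ∉ K ∩ prefixSet g i := fun h =>
      apply_notMem_prefixSet g i (mem_inter.1 h).2
    rw [inter_insert_of_mem hK, mass_insert _ hnot, marginal_apply, prefixSet_succ]
    linarith
  · rwa [inter_insert_of_notMem hK]

lemma marginal_mem_core : marginal g ν ∈ core ν := by
  obtain ⟨h0, h1, hmono⟩ := hν.1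
  have huniv := prefixSet_of_card_le g le_rfl
  refine ⟨⟨fun a => sub_nonneg.2 (hmono (fun b => by simp; omega)), ?_⟩, fun K => ?_⟩
  · simpa [huniv, h0, h1, mass] using mass_marginal_prefixSet g ν (Fintype.card X)
  · simpa [huniv] using hν.le_mass_marginal_inter_prefixSet g K (Fintype.card X)

lemma sum_mul_le_sum_mul_marginal {c p : X → ℝ}
    (hc : Monotone (c ∘ g)) (hp : p ∈ core ν) :
    ∑ a, c a * p a ≤ ∑ a, c a * marginal g ν a := by
  have hx : ∀ k, 0 ≤ mass (p - marginal g ν) (prefixSet g k) := fun k => by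
    rw [mass_sub]
    linarith [mass_marginal_prefixSet g ν k, hp.2 (prefixSet g k), hν.1.1]
  have hx0 : ∑ a, (p - marginal g ν) a = 0 := by
    have := mass_marginal_prefixSet g ν (Fintype.card X)
    simp only [prefixSet_of_card_le g le_rfl, hν.1.1, hν.1.2.1, mass] at this
    simp [sum_sub_distrib, hp.1.2, this]
  have := sum_mul_nonpos_of_monotone g hc hx hx0
  simpa [mul_sub, sum_sub_distrib] using this

theorem core_eq_convexHull_marginal :
    core ν = convexHull ℝ (Set.range fun g : Fin (Fintype.card X) ≃ X => marginal g ν) := by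
  refine subset_antisymm (fun p hp => ?_)
    (convexHull_min (Set.range_subset_iff.2 hν.marginal_mem_core) (convex_core ν))
  by_contra hp'
  obtain ⟨f, u, hf, hfp⟩ := geometric_hahn_banach_closed_point (convex_convexHull ℝ _)
    ((Set.finite_range _).isCompact_convexHull ℝ).isClosed hp'
  set c : X → ℝ := fun a => f fun b => if a = b then 1 else 0
  have hfc : ∀ x, f x = ∑ a, c a * x a := fun x =>
    ((f : (X → ℝ) →ₗ[ℝ] ℝ).pi_apply_eq_sum_univ x).trans (by simp [c, mul_comm])
  obtain ⟨g, hg⟩ := exists_monotone_comp c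
  have hg' := hf _ (subset_convexHull ℝ _ ⟨g, rfl⟩)
  rw [hfc] at hfp hg'
  linarith [hν.sum_mul_le_sum_mul_marginal g hg hp]

end IsConvexCap

def mixture {D α : Type*} [Fintype D] (Q : D → ℝ) (f : D → α → ℝ) (x : α) : ℝ :=
  ∑ d, Q d * f d x

section Mixture

variable {D : Type*} [Fintype D] {Q : D → ℝ} {ν : D → Finset X → ℝ}

lemma isConvexCap_mixture (hcap : ∀ d, IsConvexCap (ν d)) (hQ : IsProb Q) :
    IsConvexCap (mixture Q ν) := by
  refine ⟨⟨?_, ?_, fun A B hAB => ?_⟩, fun A B => ?_⟩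
  · simp [mixture, (hcap _).1.1]
  · simp [mixture, (hcap _).1.2.1, hQ.2]
  · exact sum_le_sum fun d _ => mul_le_mul_of_nonneg_left ((hcap d).1.2.2 hAB) (hQ.1 d)
  · simp only [mixture, ← sum_add_distrib, ← mul_add]
    exact sum_le_sum fun d _ => mul_le_mul_of_nonneg_left ((hcap d).2 A B) (hQ.1 d)

omit [DecidableEq X] in
lemma marginal_mixture (g : Fin (Fintype.card X) ≃ X) :
    marginal g (mixture Q ν) = mixture Q fun d => marginal g (ν d) := by
  ext a
  simp [marginal, mixture, mul_sub, sum_sub_distrib]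

omit [DecidableEq X] in
lemma mixture_mem_core (hQ : IsProb Q) {ρ : D → X → ℝ} (hρ : ∀ d, ρ d ∈ core (ν d)) :
    mixture Q ρ ∈ core (mixture Q ν) := by
  have hmass : ∀ K, mass (mixture Q ρ) K = mixture Q (fun d => mass (ρ d)) K := fun K => by
    simp only [mass, mixture, mul_sum]
    exact sum_comm
  have hρ1 : ∀ d, mass (ρ d) univ = 1 := fun d => (hρ d).1.2
  refine ⟨⟨fun a => sum_nonneg fun d _ => mul_nonneg (hQ.1 d) ((hρ d).1.1 a), ?_⟩, fun K => ?_⟩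
  · exact (hmass univ).trans (by simp [mixture, hρ1, hQ.2])
  · rw [hmass]
    exact sum_le_sum fun d _ => mul_le_mul_of_nonneg_left ((hρ d).2 K) (hQ.1 d)

theorem core_mixture (hcap : ∀ d, IsConvexCap (ν d)) (hQ : IsProb Q) :
    core (mixture Q ν) = mixture Q '' Set.univ.pi fun d => core (ν d) := by
  let L : (D → X → ℝ) →ₗ[ℝ] X → ℝ := ∑ d, Q d • LinearMap.proj d
  have hL : ⇑L = mixture Q := by
    ext ρ a
    simp [L, mixture]
  refine subset_antisymm ?_ (Set.image_subset_iff.2 fun ρ hρ =>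
    mixture_mem_core hQ fun d => hρ d (Set.mem_univ d))
  have hmarg : (Set.range fun g => marginal g (mixture Q ν)) =
      L '' Set.range fun g d => marginal g (ν d) := by
    rw [← Set.range_comp, hL]
    simp only [marginal_mixture]
    rfl
  rw [(isConvexCap_mixture hcap hQ).core_eq_convexHull_marginal, hmarg,
    ← LinearMap.image_convexHull, hL]
  refine Set.image_mono (convexHull_min ?_ (convex_pi fun d _ => convex_core (ν d)))
  rintro _ ⟨g, rfl⟩ d -
  exact (hcap d).marginal_mem_core g

end Mixture

theorem stmt4_general {D : Type*} [Fintype D] (C : D → Finset X) (ν : D → Finset X → ℝ)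
    (hcap : ∀ d, IsConvexCap (ν d))
    (hext : ∀ d K, ν d K = ν d (K ∩ C d))
    (lam : X → ℝ) (hlam : IsProb lam) (Q : D → ℝ) (hQ : IsProb Q) :
    (∃ ρ : D → X → ℝ, (∀ d, ρ d ∈ core (ν d)) ∧ ∀ a, lam a = ∑ d, Q d * ρ d a) ↔
      ∀ K : Finset X, ∑ d, Q d * ν d (K ∩ C d) ≤ mass lam K := by
  have hcore : lam ∈ core (mixture Q ν) ↔ ∀ K, ∑ d, Q d * ν d (K ∩ C d) ≤ mass lam K := by
    simp only [core, Set.mem_ofPred_eq, mixture, ← hext, hlam, true_and]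
  rw [← hcore, core_mixture hcap hQ]
  simp only [Set.mem_image, Set.mem_pi, Set.mem_univ, true_implies, funext_iff, mixture, eq_comm]

/-- Main identification theorem: Q rationalizes λ given cores of convex capacities
iff the dominance inequalities hold. -/
theorem stmt4 {D : Type*} [Fintype D] (C : D → Finset X) (ν : D → Finset X → ℝ)
    (hcap : ∀ d, IsConvexCap (ν d)) (hone : ∀ d, ν d (C d) = 1)
    (hext : ∀ d K, ν d K = ν d (K ∩ C d))
    (lam : X → ℝ) (hlam : IsProb lam) (Q : D → ℝ) (hQ : IsProb Q) :
    (∃ ρ : D → X → ℝ, (∀ d, ρ d ∈ core (ν d)) ∧ ∀ a, lam a = ∑ d, Q d * ρ d a) ↔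
      ∀ K : Finset X, ∑ d, Q d * ν d (K ∩ C d) ≤ mass lam K :=
  stmt4_general C ν hcap hext lam hlam Q hQ
end

section
/- Let C be a nonempty subset of a finite set X, ρ̂ a probability measure on C, and ε ∈ [0,1]. Define ν(K) = (1-ε)ρ̂(K ∩ C) + ε·1_{C ⊆ K}. Then ν is a convex capacity on X and its core equals the ε-contamination set {(1-ε)ρ̂ + ερ̃ : ρ̃ ∈ Δ(C)}. -/
open Finset

variable {X : Type*} [Fintype X] [DecidableEq X]

/-! The contamination capacity is the mixture `(1 - ε) ρ̂ + ε u_C` of the additive capacity `ρ̂`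
and the unanimity game `u_C K = 1_{C ⊆ K}`. Both are convex, hence so is the mixture, and the
core of `u_C` is `Δ(C)`, so mixing cores gives `core ν ⊇ (1 - ε) ρ̂ + ε Δ(C)`. Conversely, a
`p ∈ core ν` has `p C ≥ ν C = 1`, so it lives on `C`, and the singleton constraints give
`p ≥ (1 - ε) ρ̂` pointwise; the excess `p - (1 - ε) ρ̂` has total mass `ε`, hence is `ε ρ̃` for
some `ρ̃ ∈ Δ(C)`. -/

def mix {α : Type*} (t : ℝ) (f g : α → ℝ) : α → ℝ := fun x => (1 - t) * f x + t * g x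

@[simp]
lemma mix_apply {α : Type*} (t : ℝ) (f g : α → ℝ) (x : α) :
    mix t f g x = (1 - t) * f x + t * g x :=
  rfl

def unanimity {α : Type*} [DecidableEq α] (C K : Finset α) : ℝ := if C ⊆ K then 1 else 0

section General

variable {α : Type*} {p q : α → ℝ} {C : Finset α}

lemma mass_mono (hp : ∀ a, 0 ≤ p a) {A B : Finset α} (hAB : A ⊆ B) : mass p A ≤ mass p B :=
  sum_le_sum_of_subset_of_nonneg hAB fun a _ _ => hp a

lemma mass_inter_of_support [DecidableEq α] (hpC : ∀ a ∉ C, p a = 0) (K : Finset α) :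
    mass p (K ∩ C) = mass p K :=
  sum_subset inter_subset_left fun a haK ha => hpC a fun haC => ha (mem_inter.2 ⟨haK, haC⟩)

lemma mass_mix (t : ℝ) (K : Finset α) :
    mass (mix t p q) K = (1 - t) * mass p K + t * mass q K := by
  simp only [mass, mix_apply, sum_add_distrib, mul_sum]

lemma unanimity_nonneg [DecidableEq α] (C K : Finset α) : 0 ≤ unanimity C K := by
  unfold unanimity
  split_ifs <;> norm_num

lemma unanimity_self [DecidableEq α] (C : Finset α) : unanimity C C = 1 :=
  if_pos Subset.rfl

variable [Fintype α]

lemma mass_eq_one_of_support [DecidableEq α] (hp : IsProb p) (hpC : ∀ a ∉ C, p a = 0) :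
    mass p C = 1 := by
  rw [← univ_inter C, mass_inter_of_support hpC]
  exact hp.2

lemma eq_zero_of_one_le_mass [DecidableEq α] (hp : IsProb p) (hpC : 1 ≤ mass p C) :
    ∀ a ∉ C, p a = 0 := by
  intro a ha
  have hcompl : ∑ b ∈ Cᶜ, p b + mass p C = 1 := (sum_compl_add_sum C p).trans hp.2
  have hle : p a ≤ ∑ b ∈ Cᶜ, p b := single_le_sum (fun b _ => hp.1 b) (mem_compl.2 ha)
  linarith [hp.1 a]

lemma IsProb.mix (hp : IsProb p) (hq : IsProb q) {t : ℝ} (ht0 : 0 ≤ t) (ht1 : t ≤ 1) :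
    IsProb (mix t p q) := by
  refine ⟨fun a => ?_, ?_⟩
  · exact add_nonneg (mul_nonneg (by linarith) (hp.1 a)) (mul_nonneg ht0 (hq.1 a))
  · simp only [mix_apply, sum_add_distrib, ← mul_sum, hp.2, hq.2]
    ring

lemma exists_eq_sum_mul_of_nonneg (hp : ∀ a, 0 ≤ p a) (hpC : ∀ a ∉ C, p a = 0)
    (hq : IsProb q) (hqC : ∀ a ∉ C, q a = 0) :
    ∃ ρ : α → ℝ, (IsProb ρ ∧ ∀ a ∉ C, ρ a = 0) ∧ ∀ a, p a = (∑ b, p b) * ρ a := by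
  by_cases hs : ∑ b, p b = 0
  · refine ⟨q, ⟨hq, hqC⟩, fun a => ?_⟩
    rw [hs, zero_mul]
    exact (sum_eq_zero_iff_of_nonneg fun b _ => hp b).1 hs a (mem_univ a)
  · refine ⟨fun a => p a / ∑ b, p b, ⟨⟨fun a => ?_, ?_⟩, fun a ha => ?_⟩, fun a => ?_⟩
    · exact div_nonneg (hp a) (sum_nonneg fun b _ => hp b)
    · rw [← sum_div, div_self hs]
    · simp [hpC a ha]
    · rw [mul_div_cancel₀ _ hs]

lemma mix_mem_core {ν₁ ν₂ : Finset α → ℝ} {p q : α → ℝ} (hp : p ∈ core ν₁) (hq : q ∈ core ν₂)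
    {t : ℝ} (ht0 : 0 ≤ t) (ht1 : t ≤ 1) : mix t p q ∈ core (mix t ν₁ ν₂) := by
  refine ⟨hp.1.mix hq.1 ht0 ht1, fun K => ?_⟩
  rw [mass_mix, mix_apply]
  exact add_le_add (mul_le_mul_of_nonneg_left (hp.2 K) (by linarith))
    (mul_le_mul_of_nonneg_left (hq.2 K) ht0)

end General

section Capacity

variable {α : Type*} [Fintype α] [DecidableEq α]

lemma IsProb.isConvexCap_mass {p : α → ℝ} (hp : IsProb p) : IsConvexCap (mass p) :=
  ⟨⟨sum_empty, hp.2, fun _ _ => mass_mono hp.1⟩, fun _ _ => sum_union_inter.ge⟩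

lemma isConvexCap_unanimity {C : Finset α} (hC : C.Nonempty) : IsConvexCap (unanimity C) := by
  refine ⟨⟨?_, if_pos (subset_univ C), fun A B hAB => ?_⟩, fun A B => ?_⟩
  · simp [unanimity, hC.ne_empty]
  · unfold unanimity
    split_ifs with hA hB
    exacts [le_rfl, absurd (hA.trans hAB) hB, zero_le_one, le_rfl]
  · by_cases hA : C ⊆ A
    · by_cases hB : C ⊆ B <;>
        simp [unanimity, hA, hB, hA.trans subset_union_left, subset_inter_iff]
    by_cases hB : C ⊆ B
    · simp [unanimity, hA, hB, hB.trans subset_union_right, subset_inter_iff]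
    · simpa [unanimity, hA, hB] using
        add_nonneg (unanimity_nonneg C (A ∪ B)) (unanimity_nonneg C (A ∩ B))

lemma IsConvexCap.mix {ν₁ ν₂ : Finset α → ℝ} (h₁ : IsConvexCap ν₁) (h₂ : IsConvexCap ν₂)
    {t : ℝ} (ht0 : 0 ≤ t) (ht1 : t ≤ 1) : IsConvexCap (mix t ν₁ ν₂) := by
  obtain ⟨⟨h₁_empty, h₁_univ, h₁_mono⟩, h₁_super⟩ := h₁
  obtain ⟨⟨h₂_empty, h₂_univ, h₂_mono⟩, h₂_super⟩ := h₂
  have ht1' : 0 ≤ 1 - t := by linarith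
  refine ⟨⟨?_, ?_, fun A B hAB => ?_⟩, fun A B => ?_⟩ <;> simp only [mix_apply]
  · rw [h₁_empty, h₂_empty]; ring
  · rw [h₁_univ, h₂_univ]; ring
  · exact add_le_add (mul_le_mul_of_nonneg_left (h₁_mono hAB) ht1')
      (mul_le_mul_of_nonneg_left (h₂_mono hAB) ht0)
  · linarith [mul_le_mul_of_nonneg_left (h₁_super A B) ht1',
      mul_le_mul_of_nonneg_left (h₂_super A B) ht0]

lemma mem_core_unanimity {C : Finset α} {q : α → ℝ} :
    q ∈ core (unanimity C) ↔ IsProb q ∧ ∀ a ∉ C, q a = 0 := by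
  refine ⟨fun hq => ⟨hq.1, eq_zero_of_one_le_mass hq.1 ?_⟩, fun ⟨hq, hqC⟩ => ⟨hq, fun K => ?_⟩⟩
  · simpa [unanimity_self] using hq.2 C
  · unfold unanimity
    split_ifs with hCK
    · exact (mass_eq_one_of_support hq hqC).ge.trans (mass_mono hq.1 hCK)
    · exact sum_nonneg fun a _ => hq.1 a

lemma exists_mix_eq_of_mem_core {C : Finset α} {ρ p : α → ℝ} (hρ : IsProb ρ)
    (hρC : ∀ a ∉ C, ρ a = 0) {ε : ℝ} (hε0 : 0 ≤ ε)
    (hp : p ∈ core (mix ε (mass ρ) (unanimity C))) :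
    ∃ ρt : α → ℝ, (IsProb ρt ∧ ∀ a ∉ C, ρt a = 0) ∧ p = mix ε ρ ρt := by
  have hpC : ∀ a ∉ C, p a = 0 := by
    refine eq_zero_of_one_le_mass hp.1 ?_
    have hνC := hp.2 C
    rw [mix_apply, mass_eq_one_of_support hρ hρC, unanimity_self] at hνC
    linarith
  have hp_ge : ∀ a, (1 - ε) * ρ a ≤ p a := by
    intro a
    have hνa := hp.2 {a}
    simp only [mix_apply, mass, sum_singleton] at hνa
    linarith [mul_nonneg hε0 (unanimity_nonneg C {a})]
  obtain ⟨ρt, hρt, hexcess⟩ := exists_eq_sum_mul_of_nonneg (p := fun a => p a - (1 - ε) * ρ a)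
    (fun a => sub_nonneg.2 (hp_ge a)) (fun a ha => by simp [hpC a ha, hρC a ha]) hρ hρC
  have hexcess_sum : ∑ a, (p a - (1 - ε) * ρ a) = ε := by
    rw [sum_sub_distrib, ← mul_sum, hp.1.2, hρ.2]
    ring
  refine ⟨ρt, hρt, funext fun a => ?_⟩
  have hpa := hexcess a
  rw [hexcess_sum] at hpa
  rw [mix_apply]
  linarith

end Capacity

/-- The ε-contamination capacity is convex and its core is the contamination set. -/
theorem stmt6 (C : Finset X) (hC : C.Nonempty) (ρhat : X → ℝ)
    (hρhat : IsProb ρhat ∧ ∀ a ∉ C, ρhat a = 0)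
    (ε : ℝ) (hε : ε ∈ Set.Icc (0:ℝ) 1) (ν : Finset X → ℝ)
    (hν : ∀ K : Finset X,
      ν K = (1 - ε) * mass ρhat (K ∩ C) + ε * (if C ⊆ K then 1 else 0)) :
    IsConvexCap ν ∧
      core ν = {p | ∃ ρt : X → ℝ, (IsProb ρt ∧ ∀ a ∉ C, ρt a = 0) ∧
        p = fun a => (1 - ε) * ρhat a + ε * ρt a} := by
  obtain ⟨hρ, hρC⟩ := hρhat
  obtain ⟨hε0, hε1⟩ := hε
  obtain rfl : ν = mix ε (mass ρhat) (unanimity C) :=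
    funext fun K => by rw [hν, mass_inter_of_support hρC, mix_apply, unanimity]
  refine ⟨hρ.isConvexCap_mass.mix (isConvexCap_unanimity hC) hε0 hε1, Set.ext fun p =>
    ⟨exists_mix_eq_of_mem_core hρ hρC hε0, ?_⟩⟩
  rintro ⟨ρt, hρt, rfl⟩
  exact mix_mem_core ⟨hρ, fun K => le_rfl⟩ (mem_core_unanimity.2 hρt) hε0 hε1
end

section
/- Let ψ be a convex capacity on a finite set 𝒜, Π = core(ψ), and d : 𝒜 → X a function to a finite set X. Define ν on X by ν(K) = ψ(d⁻¹(K)). Then ν is a convex capacity on X, and core(ν) = {ρ_π : π ∈ Π}, where ρ_π(K) = π(d⁻¹(K)) is the pushforward of π under d. -/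
open Finset

variable {X : Type*} [Fintype X] [DecidableEq X]

/-!
The first claim holds because `K ↦ d⁻¹ K` preserves unions, intersections and inclusions, and
`π(d⁻¹ K) ≥ ψ(d⁻¹ K) = ν K` shows that pushforwards of core elements lie in `core ν`.

Conversely, let `ρ ∈ core ν` and let `π` minimise `‖d_* π - ρ‖²` on the core of `ψ` (nonempty by
Shapley's greedy construction, and compact). The discrepancy `s = d_* π - ρ` sums to `0`; if it is
nonzero, let `m < 0` be its minimum and `K = {s > m}`, so that `∑_K s > 0`. Sets `B` with
`π B = ψ B` are called tight; by supermodularity they form a lattice. If `d⁻¹ K` is tight, then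
`∑_K s = ψ(d⁻¹ K) - ρ K = ν K - ρ K ≤ 0`, a contradiction. Otherwise the lattice property yields
`a ∈ d⁻¹ K` and `b ∉ d⁻¹ K` such that every tight set containing `a` contains `b`; shifting a
little mass from `a` to `b` keeps `π` in the core and strictly decreases `‖d_* π - ρ‖²`.
-/

section Core

variable {A : Type*} [Fintype A] {ψ : Finset A → ℝ}

lemma IsCapacity.nonneg_s10 (hψ : IsCapacity ψ) (B : Finset A) : 0 ≤ ψ B :=
  hψ.1 ▸ hψ.2.2 (empty_subset B)

lemma mem_core_of_sum_eq_one (hψ : IsCapacity ψ) {p : A → ℝ} (hsum : ∑ a, p a = 1)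
    (hle : ∀ B, ψ B ≤ mass p B) : p ∈ core ψ :=
  ⟨⟨fun a => (hψ.nonneg_s10 {a}).trans (by simpa [mass] using hle {a}), hsum⟩, hle⟩

lemma core_eq_stdSimplex_inter (ψ : Finset A → ℝ) :
    core ψ = stdSimplex ℝ A ∩ ⋂ B, {p | ψ B ≤ mass p B} := by
  ext p
  simp [core, IsProb, stdSimplex]

lemma isCompact_core (ψ : Finset A → ℝ) : IsCompact (core ψ) := by
  rw [core_eq_stdSimplex_inter]
  refine (isCompact_stdSimplex ℝ A).inter_right (isClosed_iInter fun B => ?_)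
  exact isClosed_le continuous_const (continuous_finsetSum _ fun a _ => continuous_apply a)

variable [DecidableEq A]

lemma IsConvexCap.exists_le_mass_of_subset (hψ : IsConvexCap ψ) (U : Finset A) :
    ∃ p : A → ℝ, mass p U = ψ U ∧ ∀ B ⊆ U, ψ B ≤ mass p B := by
  induction U using Finset.induction_on with
  | empty =>
    exact ⟨0, by simp [mass, hψ.1.1], fun B hB => by simp [subset_empty.1 hB, hψ.1.1, mass]⟩
  | insert a U ha ih =>
    obtain ⟨p, hpU, hp⟩ := ih
    set q := Function.update p a (ψ (insert a U) - ψ U)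
    refine ⟨q, by simp [q, mass, sum_update_of_mem (mem_insert_self a U), ha, ← hpU],
      fun B hB => ?_⟩
    by_cases haB : a ∈ B
    · have herase : B.erase a ⊆ U := subset_insert_iff.1 hB
      have hunion : B ∪ U = insert a U := by
        conv_lhs => rw [← insert_erase haB]
        rw [insert_union, union_eq_right.2 herase]
      have hinter : B ∩ U = B.erase a := by
        conv_lhs => rw [← insert_erase haB]
        rw [insert_inter_of_notMem ha, inter_eq_left.2 herase]
      have hsuper : ψ B + ψ U ≤ ψ (insert a U) + ψ (B.erase a) := hunion ▸ hinter ▸ hψ.2 B U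
      calc ψ B ≤ (ψ (insert a U) - ψ U) + mass p (B.erase a) := by linarith [hp _ herase]
        _ = mass q B := by
          rw [mass, mass, ← add_sum_erase B q haB, sum_update_of_notMem (notMem_erase a B)]
          simp [q]
    · rw [mass, sum_update_of_notMem haB]
      exact hp B fun b hb => (mem_insert.1 (hB hb)).resolve_left (ne_of_mem_of_not_mem hb haB)

lemma IsConvexCap.core_nonempty_s10 (hψ : IsConvexCap ψ) : (core ψ).Nonempty := by
  obtain ⟨p, hp, hle⟩ := hψ.exists_le_mass_of_subset univ
  exact ⟨p, mem_core_of_sum_eq_one hψ.1 (hp.trans hψ.1.2.1) fun B => hle B (subset_univ B)⟩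

end Core

section Pushforward

variable {A : Type*} [Fintype A]

def pushforward (d : A → X) (p : A → ℝ) : X → ℝ :=
  fun x => ∑ a ∈ univ.filter (fun a => d a = x), p a

def capPushforward (d : A → X) (ψ : Finset A → ℝ) : Finset X → ℝ :=
  fun K => ψ (univ.filter (fun a => d a ∈ K))

omit [Fintype X] in
lemma mass_pushforward (d : A → X) (p : A → ℝ) (K : Finset X) :
    mass (pushforward d p) K = mass p (univ.filter (fun a => d a ∈ K)) :=
  sum_fiberwise_eq_sum_filter univ K d p

lemma sum_pushforward (d : A → X) (p : A → ℝ) : ∑ x, pushforward d p x = ∑ a, p a := by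
  simpa [mass] using mass_pushforward d p univ

lemma isConvexCap_capPushforward [DecidableEq A] {ψ : Finset A → ℝ} (hψ : IsConvexCap ψ)
    (d : A → X) : IsConvexCap (capPushforward d ψ) := by
  obtain ⟨⟨h0, h1, hmono⟩, hconv⟩ := hψ
  refine ⟨⟨by simpa [capPushforward] using h0, by simpa [capPushforward] using h1, ?_⟩, ?_⟩
  · exact fun K L hKL => hmono fun a => by simpa using fun h => hKL h
  · intro K L
    simpa [capPushforward, filter_or, filter_and] using
      hconv (univ.filter fun a => d a ∈ K) (univ.filter fun a => d a ∈ L)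

lemma pushforward_mem_core {ψ : Finset A → ℝ} {π : A → ℝ} (hπ : π ∈ core ψ) (d : A → X) :
    pushforward d π ∈ core (capPushforward d ψ) := by
  refine ⟨⟨fun x => sum_nonneg fun a _ => hπ.1.1 a, (sum_pushforward d π).trans hπ.1.2⟩,
    fun K => ?_⟩
  rw [mass_pushforward]
  exact hπ.2 _

end Pushforward

section Tight

variable {A : Type*} [Fintype A] {ψ : Finset A → ℝ} {π : A → ℝ}

def IsTight (ψ : Finset A → ℝ) (π : A → ℝ) (B : Finset A) : Prop := mass π B = ψ B

lemma isTight_empty (hψ : IsCapacity ψ) : IsTight ψ π ∅ := by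
  simp [IsTight, mass, hψ.1]

lemma isTight_univ (hψ : IsCapacity ψ) (hπ : π ∈ core ψ) : IsTight ψ π univ :=
  hπ.1.2.trans hψ.2.1.symm

lemma sum_pushforward_sub_le_of_isTight {d : A → X} {ρ : X → ℝ}
    (hρ : ρ ∈ core (capPushforward d ψ)) {K : Finset X}
    (hK : IsTight ψ π (univ.filter fun a => d a ∈ K)) :
    ∑ x ∈ K, (pushforward d π x - ρ x) ≤ 0 := by
  have hmass : mass (pushforward d π) K = ψ (univ.filter fun a => d a ∈ K) :=
    (mass_pushforward d π K).trans hK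
  have := hρ.2 K
  rw [sum_sub_distrib]
  unfold mass capPushforward at *
  linarith

variable [DecidableEq A] (hψ : IsConvexCap ψ) (hπ : π ∈ core ψ)
include hψ hπ

lemma IsTight.union_inter {B C : Finset A} (hB : IsTight ψ π B) (hC : IsTight ψ π C) :
    IsTight ψ π (B ∪ C) ∧ IsTight ψ π (B ∩ C) := by
  have hmass : mass π (B ∪ C) + mass π (B ∩ C) = mass π B + mass π C := sum_union_inter
  have := hψ.2 B C
  have := hπ.2 (B ∪ C)
  have := hπ.2 (B ∩ C)
  unfold IsTight at *
  constructor <;> linarith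

lemma exists_isTight_superset_not_mem {S : Finset A} {b : A}
    (h : ∀ a ∈ S, ∃ B, IsTight ψ π B ∧ a ∈ B ∧ b ∉ B) :
    ∃ C, IsTight ψ π C ∧ S ⊆ C ∧ b ∉ C := by
  choose B hB using h
  refine ⟨S.attach.sup fun a => B a a.2, ?_, fun a ha => ?_, fun hb => ?_⟩
  · exact sup_induction (isTight_empty hψ.1) (fun _ h₁ _ h₂ => (h₁.union_inter hψ hπ h₂).1)
      fun a _ => (hB a a.2).1
  · exact le_sup (f := fun a : S => B a a.2) (mem_attach S ⟨a, ha⟩) (hB a ha).2.1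
  · obtain ⟨a, -, hba⟩ := mem_sup.1 hb
    exact (hB a a.2).2.2 hba

lemma isTight_of_forall_not_mem {S : Finset A}
    (h : ∀ b ∉ S, ∃ C, IsTight ψ π C ∧ S ⊆ C ∧ b ∉ C) : IsTight ψ π S := by
  choose C hC using h
  have hS : S = Sᶜ.attach.inf fun b => C b (mem_compl.1 b.2) := by
    refine Subset.antisymm (Finset.le_inf fun b _ => (hC b _).2.1) fun a ha => ?_
    by_contra haS
    exact (hC a haS).2.2 (mem_inf.1 ha ⟨a, mem_compl.2 haS⟩ (mem_attach _ _))
  rw [hS]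
  exact inf_induction (isTight_univ hψ.1 hπ) (fun _ h₁ _ h₂ => (h₁.union_inter hψ hπ h₂).2)
    fun b _ => (hC b _).1

lemma isTight_or_exists_forced (S : Finset A) :
    IsTight ψ π S ∨ ∃ a ∈ S, ∃ b ∉ S, ∀ B, IsTight ψ π B → a ∈ B → b ∈ B := by
  by_contra! h
  exact h.1 (isTight_of_forall_not_mem hψ hπ fun b hb =>
    exists_isTight_superset_not_mem hψ hπ fun a ha => h.2 a ha b hb)

end Tight

section Transfer

open Filter Topology

variable {A : Type*} [Fintype A] [DecidableEq A]

def transfer (p : A → ℝ) (a b : A) (ε : ℝ) : A → ℝ := p + ε • (Pi.single b 1 - Pi.single a 1)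

omit [Fintype A] in
lemma mass_transfer (p : A → ℝ) (a b : A) (ε : ℝ) (B : Finset A) :
    mass (transfer p a b ε) B =
      mass p B + ε * ((if b ∈ B then 1 else 0) - (if a ∈ B then 1 else 0)) := by
  simp [mass, transfer, sum_add_distrib, ← mul_sum, sum_sub_distrib, sum_pi_single']

omit [Fintype X] in
lemma pushforward_transfer (d : A → X) (p : A → ℝ) (a b : A) (ε : ℝ) :
    pushforward d (transfer p a b ε) = transfer (pushforward d p) (d a) (d b) ε := by
  ext x
  change mass _ _ = _
  rw [mass_transfer]
  simp [pushforward, mass, transfer, Pi.single_apply, eq_comm]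

lemma sum_sq_transfer (s : X → ℝ) {x y : X} (hxy : x ≠ y) (ε : ℝ) :
    ∑ z, transfer s x y ε z ^ 2 = ∑ z, s z ^ 2 + 2 * ε * (s y - s x + ε) := by
  have hz : ∀ z, transfer s x y ε z ^ 2 = s z ^ 2
      + 2 * ε * ((Pi.single y (s y) : X → ℝ) z - (Pi.single x (s x) : X → ℝ) z)
      + ε ^ 2 * ((Pi.single y 1 : X → ℝ) z + (Pi.single x 1 : X → ℝ) z) := by
    intro z
    rcases eq_or_ne z y with rfl | hzy <;> rcases eq_or_ne z x with rfl | hzx <;>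
      simp_all [transfer] <;> ring
  simp only [hz, sum_add_distrib, ← mul_sum, sum_sub_distrib, sum_pi_single', mem_univ, if_true]
  ring

lemma eventually_transfer_mem_core {ψ : Finset A → ℝ} (hψ : IsCapacity ψ) {π : A → ℝ}
    (hπ : π ∈ core ψ) {a b : A} (hforced : ∀ B, IsTight ψ π B → a ∈ B → b ∈ B) :
    ∀ᶠ ε in 𝓝[>] 0, transfer π a b ε ∈ core ψ := by
  have hle : ∀ B, ∀ᶠ ε in 𝓝[>] 0, ψ B ≤ mass (transfer π a b ε) B := by
    intro B
    simp only [mass_transfer]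
    by_cases hT : IsTight ψ π B
    · have hgain : 0 ≤ (if b ∈ B then 1 else 0) - (if a ∈ B then (1 : ℝ) else 0) := by
        by_cases ha : a ∈ B <;> simp [ha, hforced B hT, apply_ite]
      filter_upwards [self_mem_nhdsWithin] with ε (hε : 0 < ε)
      exact hT.symm.le.trans (le_add_of_nonneg_right (mul_nonneg hε.le hgain))
    · have hslack : 0 < mass π B - ψ B := sub_pos.2 ((hπ.2 B).lt_of_ne (Ne.symm hT))
      have hloss : -1 ≤ (if b ∈ B then 1 else 0) - (if a ∈ B then (1 : ℝ) else 0) := by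
        split_ifs <;> norm_num
      filter_upwards [Ioo_mem_nhdsGT hslack] with ε ⟨hε0, hε⟩
      nlinarith
  filter_upwards [eventually_all.2 hle] with ε hε
  refine mem_core_of_sum_eq_one hψ ?_ hε
  simpa [mass, hπ.1.2] using mass_transfer π a b ε univ

lemma exists_mem_core_sum_sq_lt {ψ : Finset A → ℝ} (hψ : IsCapacity ψ) {π : A → ℝ}
    (hπ : π ∈ core ψ) (d : A → X) (ρ : X → ℝ) {a b : A}
    (hforced : ∀ B, IsTight ψ π B → a ∈ B → b ∈ B) (hd : d a ≠ d b)
    (hlt : pushforward d π (d b) - ρ (d b) < pushforward d π (d a) - ρ (d a)) :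
    ∃ π' ∈ core ψ,
      ∑ x, (pushforward d π' x - ρ x) ^ 2 < ∑ x, (pushforward d π x - ρ x) ^ 2 := by
  set s := pushforward d π - ρ with hs_def
  obtain ⟨ε, hε_core, hε_pos, hε_small⟩ := ((eventually_transfer_mem_core hψ hπ hforced).and
    (Ioo_mem_nhdsGT (sub_pos.2 hlt) : ∀ᶠ ε in 𝓝[>] 0, ε ∈ Set.Ioo 0 (s (d a) - s (d b)))).exists
  have hshift : ∀ x, transfer (pushforward d π) (d a) (d b) ε x - ρ x =
      transfer s (d a) (d b) ε x :=
    fun x => by simp only [transfer, hs_def, Pi.add_apply, Pi.sub_apply]; ring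
  refine ⟨_, hε_core, ?_⟩
  simp only [pushforward_transfer, hshift, sum_sq_transfer s hd]
  change _ < ∑ x, s x ^ 2
  nlinarith

end Transfer

omit [DecidableEq X] in
lemma sum_filter_gt_pos {s : X → ℝ} (hsum : ∑ x, s x = 0) {y : X} (hneg : s y < 0) :
    0 < ∑ x ∈ univ.filter (fun x => s y < s x), s x := by
  have hrest : ∑ x ∈ univ.filter (fun x => ¬ s y < s x), s x < 0 :=
    sum_neg (fun x hx => (not_lt.1 (mem_filter.1 hx).2).trans_lt hneg) ⟨y, by simp⟩
  linarith [sum_filter_add_sum_filter_not univ (fun x => s y < s x) s]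

section Lift

variable {A : Type*} [Fintype A] [DecidableEq A] {ψ : Finset A → ℝ}

lemma pushforward_eq_of_isMinOn (hψ : IsConvexCap ψ) (d : A → X) {ρ : X → ℝ}
    (hρ : ρ ∈ core (capPushforward d ψ)) {π : A → ℝ} (hπ : π ∈ core ψ)
    (hmin : IsMinOn (fun p => ∑ x, (pushforward d p x - ρ x) ^ 2) (core ψ) π) :
    pushforward d π = ρ := by
  set s := pushforward d π - ρ with hs_def
  rw [← sub_eq_zero, ← hs_def]
  by_contra hs
  obtain ⟨x₀, -⟩ := Function.ne_iff.1 hs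
  have hsum : ∑ x, s x = 0 := by
    simp [hs_def, sum_sub_distrib, sum_pushforward, hπ.1.2, hρ.1.2]
  obtain ⟨y, -, hy⟩ := exists_min_image univ s ⟨x₀, mem_univ x₀⟩
  have hneg : s y < 0 := by
    by_contra! h
    exact hs <| funext fun x =>
      (sum_eq_zero_iff_of_nonneg fun x hx => h.trans (hy x hx)).1 hsum x (mem_univ x)
  set K := univ.filter (fun x => s y < s x)
  rcases isTight_or_exists_forced hψ hπ (univ.filter fun a => d a ∈ K) with
    htight | ⟨a, ha, b, hb, hforced⟩
  · exact (sum_filter_gt_pos hsum hneg).not_ge (sum_pushforward_sub_le_of_isTight hρ htight)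
  · simp only [mem_filter, mem_univ, true_and, K] at ha hb
    obtain ⟨π', hπ', hlt⟩ := exists_mem_core_sum_sq_lt hψ.1 hπ d ρ hforced
      (fun h => hb (h ▸ ha)) ((not_lt.1 hb).trans_lt ha)
    exact (hmin hπ').not_gt hlt

lemma exists_mem_core_pushforward_eq (hψ : IsConvexCap ψ) (d : A → X) {ρ : X → ℝ}
    (hρ : ρ ∈ core (capPushforward d ψ)) : ∃ π ∈ core ψ, pushforward d π = ρ := by
  have hcont : Continuous fun p => ∑ x, (pushforward d p x - ρ x) ^ 2 := by
    unfold pushforward; fun_prop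
  obtain ⟨π, hπ, hmin⟩ := (isCompact_core ψ).exists_isMinOn hψ.core_nonempty_s10 hcont.continuousOn
  exact ⟨π, hπ, pushforward_eq_of_isMinOn hψ d hρ hπ hmin⟩

end Lift

/-- Pushforward of a convex capacity under d is convex, and its core is the set of
pushforwards of measures in the original core. -/
theorem stmt10 {A : Type*} [Fintype A] [DecidableEq A] (ψ : Finset A → ℝ)
    (hψ : IsConvexCap ψ) (d : A → X) (ν : Finset X → ℝ)
    (hν : ∀ K : Finset X, ν K = ψ (Finset.univ.filter (fun a => d a ∈ K))) :
    IsConvexCap ν ∧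
      core ν = {ρ | ∃ π ∈ core ψ,
        ρ = fun x => ∑ a ∈ Finset.univ.filter (fun a => d a = x), π a} := by
  obtain rfl : ν = capPushforward d ψ := funext hν
  refine ⟨isConvexCap_capPushforward hψ d, Set.ext fun ρ => ⟨fun hρ => ?_, ?_⟩⟩
  · obtain ⟨π, hπ, rfl⟩ := exists_mem_core_pushforward_eq hψ d hρ
    exact ⟨π, hπ, rfl⟩
  · rintro ⟨π, hπ, rfl⟩
    exact pushforward_mem_core hπ d
end

section
/- Let ν be a convex capacity on a finite set X and let K_1 ⊆ K_2 ⊆ ... ⊆ K_m be a chain of subsets of X. Then there exists a probability measure p in core(ν) with p(K_j) = ν(K_j) for every j = 1,...,m. -/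
open Finset

variable {X : Type*} [Fintype X] [DecidableEq X]

/-!
Greedy algorithm. Rank the points of `X` injectively by `r`; the greedy weight of `x` is the
increment `ν (S ∪ {x}) - ν S`, where `S` is the set of points ranked strictly below `x`. These
weights telescope, so they reproduce `ν` on every initial segment of the ranking, and
supermodularity of `ν` makes them dominate `ν` on every set. Given a chain `K₁ ⊆ ⋯ ⊆ Kₘ`, rank a
point first by the number of `Kⱼ` missing it: every `Kⱼ` is then an initial segment.
-/

section Greedy

variable {α : Type*} [LinearOrder α]

def rankedBelow (r : X → α) (x : X) : Finset X := univ.filter fun y => r y < r x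

def IsInitialSegment (r : X → α) (D : Finset X) : Prop := ∀ x ∈ D, ∀ y, r y ≤ r x → y ∈ D

def greedy (ν : Finset X → ℝ) (r : X → α) (x : X) : ℝ :=
  ν (insert x (rankedBelow r x)) - ν (rankedBelow r x)

lemma greedy_nonneg {ν : Finset X → ℝ} (hmono : ∀ ⦃A B : Finset X⦄, A ⊆ B → ν A ≤ ν B)
    (r : X → α) (x : X) : 0 ≤ greedy ν r x :=
  sub_nonneg.2 (hmono (subset_insert _ _))

lemma rankedBelow_eq_of_isInitialSegment {r : X → α} (hr : Function.Injective r) {a : X}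
    {s : Finset X} (ha : a ∉ s) (hmax : ∀ x ∈ s, r x ≤ r a)
    (hlow : IsInitialSegment r (insert a s)) : rankedBelow r a = s := by
  ext y
  simp only [rankedBelow, mem_filter, mem_univ, true_and]
  constructor
  · intro hy
    exact (mem_insert.1 (hlow a (mem_insert_self a s) y hy.le)).resolve_left
      (fun h => hy.ne (congrArg r h))
  · intro hy
    exact (hmax y hy).lt_of_ne (fun h => ha (hr h ▸ hy))

lemma mass_greedy_of_isInitialSegment {ν : Finset X → ℝ} (h0 : ν ∅ = 0) {r : X → α}
    (hr : Function.Injective r) (D : Finset X) (hD : IsInitialSegment r D) :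
    mass (greedy ν r) D = ν D := by
  induction D using Finset.induction_on_max_value r with
  | empty => simp [mass, h0]
  | insert a s ha hmax ih =>
    have hs : IsInitialSegment r s := by
      intro x hx y hyx
      refine (mem_insert.1 (hD x (mem_insert_of_mem hx) y hyx)).resolve_left ?_
      rintro rfl
      exact ha (hr ((hmax x hx).antisymm hyx) ▸ hx)
    have hbelow := rankedBelow_eq_of_isInitialSegment hr ha hmax hD
    rw [mass, sum_insert ha, ← mass, ih hs, greedy, hbelow]
    ring

lemma le_mass_greedy {ν : Finset X → ℝ} (h0 : ν ∅ = 0)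
    (hsuper : ∀ A B : Finset X, ν A + ν B ≤ ν (A ∪ B) + ν (A ∩ B)) {r : X → α}
    (hr : Function.Injective r) (B : Finset X) : ν B ≤ mass (greedy ν r) B := by
  induction B using Finset.induction_on_max_value r with
  | empty => simp [mass, h0]
  | insert a s ha hmax ih =>
    have hsub : s ⊆ rankedBelow r a := fun x hx => by
      simpa [rankedBelow] using (hmax x hx).lt_of_ne (fun h => ha (hr h ▸ hx))
    have hunion : insert a s ∪ rankedBelow r a = insert a (rankedBelow r a) := by
      rw [insert_union, union_eq_right.2 hsub]
    have hinter : insert a s ∩ rankedBelow r a = s := by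
      rw [insert_inter_of_notMem (by simp [rankedBelow]), inter_eq_left.2 hsub]
    have := hsuper (insert a s) (rankedBelow r a)
    rw [hunion, hinter] at this
    rw [mass, sum_insert ha, ← mass, greedy]
    linarith

lemma greedy_mem_core {ν : Finset X → ℝ} (hν : IsConvexCap ν) {r : X → α}
    (hr : Function.Injective r) : greedy ν r ∈ core ν := by
  obtain ⟨⟨h0, h1, hmono⟩, hsuper⟩ := hν
  refine ⟨⟨greedy_nonneg hmono r, ?_⟩, le_mass_greedy h0 hsuper hr⟩
  rw [← h1]
  exact mass_greedy_of_isInitialSegment h0 hr univ (fun _ _ y _ => mem_univ y)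

end Greedy

section Chain

variable {ι : Type*} [Fintype ι] [LinearOrder ι]

def missCount (K : ι → Finset X) (x : X) : ℕ := #{j | x ∉ K j}

lemma exists_injective_rank_of_monotone {K : ι → Finset X} (hK : Monotone K) :
    ∃ r : X → ℕ ×ₗ Fin (Fintype.card X), Function.Injective r ∧
      ∀ j, IsInitialSegment r (K j) := by
  have missCount_lt : ∀ j, ∀ x ∈ K j, ∀ y ∉ K j, missCount K x < missCount K y := by
    intro j x hx y hy
    refine card_lt_card ⟨fun i hi => ?_, fun h => ?_⟩
    · simp only [mem_filter, mem_univ, true_and] at hi ⊢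
      exact fun hyi => hy (hK (le_of_not_ge fun hji => hi (hK hji hx)) hyi)
    · exact absurd hx (by simpa using h (by simpa using hy))
  refine ⟨fun x => toLex (missCount K x, Fintype.equivFin X x), fun x y hxy => ?_,
    fun j x hx y hyx => ?_⟩
  · exact (Fintype.equivFin X).injective (congrArg Prod.snd (toLex.injective hxy))
  · by_contra hy
    exact not_lt.2 hyx (Prod.Lex.toLex_lt_toLex.2 (Or.inl (missCount_lt j x hx y hy)))

end Chain

/-- For a convex capacity and any chain of subsets, some core element attains the
capacity simultaneously on all members of the chain. -/
theorem stmt11 (ν : Finset X → ℝ) (hν : IsConvexCap ν) (m : ℕ)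
    (K : Fin m → Finset X) (hchain : ∀ i j : Fin m, i ≤ j → K i ⊆ K j) :
    ∃ p ∈ core ν, ∀ j : Fin m, mass p (K j) = ν (K j) := by
  obtain ⟨r, hr, hlow⟩ := exists_injective_rank_of_monotone hchain
  exact ⟨greedy ν r, greedy_mem_core hν hr,
    fun j => mass_greedy_of_isInitialSegment hν.1.1 hr (K j) (hlow j)⟩
end

section
/- Let 𝒟 be a finite set of decision rules, X a finite set, C_d ⊆ X nonempty for each d ∈ 𝒟, and λ a probability measure on X. Under complete ignorance (ℛ_d = Δ(C_d)), a probability measure Q on 𝒟 rationalizes λ — i.e., there exist ρ_d ∈ Δ(C_d) with λ = Σ_d Q(d)ρ_d — if and only if λ(K) ≥ Q({d : C_d ⊆ K}) for all K ⊆ X. -/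
/-!
Necessity: a rule `d` with `C d ⊆ K` puts all of its mass inside `K`.

Sufficiency: the rationalizable `λ` form a compact convex set, so by Hahn–Banach it is enough
that every linear functional `w` satisfies `∑ d, Q d * min_{C d} w ≤ ∑ a, λ a * w a`, the left
side being the value of `w` at the mixture of point masses at minimizers of `w` on the `C d`.
This Choquet-type inequality follows by induction on the number of values of `w`: raising the
lowest level set `L` of `w` (value `m`) to the next value `m'` raises the right side by
`(m' - m) λ(L)` and the left side by `(m' - m) Q {d | C d meets L}`, and
`Q {d | C d meets L} = 1 - belief C Q Lᶜ ≥ 1 - λ(Lᶜ) = λ(L)`.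
-/

open Finset

variable {X : Type*} [Fintype X] [DecidableEq X]

/-- The paper's `Δ(C)`. -/
def simplexOn {X : Type*} [Fintype X] (C : Finset X) : Set (X → ℝ) :=
  {p | p ∈ stdSimplex ℝ X ∧ ∀ a ∉ C, p a = 0}

theorem convex_simplexOn {X : Type*} [Fintype X] (C : Finset X) : Convex ℝ (simplexOn C) := by
  rintro p ⟨hp, hpC⟩ q ⟨hq, hqC⟩ s t hs ht hst
  refine ⟨convex_stdSimplex ℝ X hp hq hs ht hst, fun a ha => ?_⟩
  simp [hpC a ha, hqC a ha]

theorem isCompact_simplexOn {X : Type*} [Fintype X] (C : Finset X) :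
    IsCompact (simplexOn C) := by
  refine (isCompact_stdSimplex ℝ X).inter_right (t := {p | ∀ a ∉ C, p a = 0}) ?_
  simp_rw [Set.ofPred_forall]
  exact isClosed_iInter fun a => isClosed_iInter fun _ =>
    isClosed_eq (continuous_apply a) continuous_const

theorem ite_eq_mem_simplexOn {X : Type*} [Fintype X] [DecidableEq X] {C : Finset X} {a : X}
    (ha : a ∈ C) : (if a = · then 1 else 0) ∈ simplexOn C :=
  ⟨ite_eq_mem_stdSimplex ℝ a, fun _ hb => if_neg (ne_of_mem_of_not_mem ha hb)⟩

section Mixture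

variable {X : Type*} [Fintype X] {D : Type*} [Fintype D]

def mixtureSet (C : D → Finset X) (Q : D → ℝ) : Set (X → ℝ) :=
  (∑ d, Q d • LinearMap.proj d : (D → X → ℝ) →ₗ[ℝ] X → ℝ) '' Set.univ.pi fun d => simplexOn (C d)

theorem convex_mixtureSet (C : D → Finset X) (Q : D → ℝ) : Convex ℝ (mixtureSet C Q) :=
  (convex_pi fun d _ => convex_simplexOn (C d)).linear_image _

theorem isCompact_mixtureSet (C : D → Finset X) (Q : D → ℝ) : IsCompact (mixtureSet C Q) :=
  (isCompact_univ_pi fun d => isCompact_simplexOn (C d)).image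
    (LinearMap.continuous_of_finiteDimensional _)

theorem mem_mixtureSet_of_forall_inf'_le [DecidableEq X] {C : D → Finset X}
    (hC : ∀ d, (C d).Nonempty) {Q : D → ℝ} {lam : X → ℝ}
    (h : ∀ w : X → ℝ, ∑ d, Q d * (C d).inf' (hC d) w ≤ ∑ a, lam a * w a) :
    lam ∈ mixtureSet C Q := by
  by_contra hlam
  obtain ⟨f, u, hfu, hu⟩ := geometric_hahn_banach_point_closed (convex_mixtureSet C Q)
    (isCompact_mixtureSet C Q).isClosed hlam
  set δ : X → X → ℝ := fun a => (if a = · then 1 else 0)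
  set w : X → ℝ := fun a => f (δ a)
  choose a haC ha using fun d => (C d).exists_mem_eq_inf' (hC d) w
  have hf : f lam = ∑ b, lam b * w b := by
    simpa only [smul_eq_mul, ContinuousLinearMap.coe_coe] using
      (f : (X → ℝ) →ₗ[ℝ] ℝ).pi_apply_eq_sum_univ lam
  have hpure : (∑ d, Q d • δ (a d)) ∈ mixtureSet C Q :=
    ⟨fun d => δ (a d), fun d _ => ite_eq_mem_simplexOn (haC d), by simp⟩
  have hf_pure : f (∑ d, Q d • δ (a d)) = ∑ d, Q d * (C d).inf' (hC d) w := by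
    simp [ha, w]
  linarith [hu _ hpure, h w]

theorem mem_mixtureSet_iff {C : D → Finset X} {Q : D → ℝ} {lam : X → ℝ} :
    lam ∈ mixtureSet C Q ↔ ∃ ρ : D → X → ℝ, (∀ d, IsProb (ρ d) ∧ ∀ a ∉ C d, ρ d a = 0) ∧
      ∀ a, lam a = ∑ d, Q d * ρ d a := by
  constructor
  · rintro ⟨ρ, hρ, rfl⟩
    exact ⟨ρ, fun d => hρ d trivial, fun a => by simp⟩
  · rintro ⟨ρ, hρ, hlam⟩
    exact ⟨ρ, fun d _ => hρ d, funext fun a => by simp [hlam]⟩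

end Mixture

section Belief

variable {X : Type*} [Fintype X] [DecidableEq X] {D : Type*} [Fintype D]

def belief (C : D → Finset X) (Q : D → ℝ) (K : Finset X) : ℝ :=
  ∑ d ∈ univ.filter (fun d => C d ⊆ K), Q d

theorem inf'_add_le_inf'_of_le {s L : Finset X} (hs : s.Nonempty) {w w' : X → ℝ} {m m' : ℝ}
    (hle : ∀ a, w a ≤ w' a) (hL : ∀ a ∈ L, w a ≤ m) (hm' : ∀ a, m' ≤ w' a) :
    s.inf' hs w + (m' - m) * (if s ⊆ Lᶜ then 0 else 1) ≤ s.inf' hs w' := by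
  split_ifs with hsL
  · rw [mul_zero, add_zero]
    exact inf'_mono_fun fun a _ => hle a
  · obtain ⟨b, hbs, hbL⟩ := not_subset.1 hsL
    have hinf : s.inf' hs w ≤ m := (inf'_le w hbs).trans (hL b (by simpa using hbL))
    have hinf' : m' ≤ s.inf' hs w' := le_inf' hs w' fun a _ => hm' a
    linarith

theorem sum_mul_inf'_le_of_raise {C : D → Finset X} (hC : ∀ d, (C d).Nonempty)
    {Q : D → ℝ} {lam : X → ℝ} (hQ : ∀ d, 0 ≤ Q d) (htot : ∑ d, Q d = ∑ a, lam a)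
    (hcut : ∀ K, belief C Q K ≤ mass lam K) {w : X → ℝ} {m m' : ℝ} (hlt : m < m')
    (hm' : ∀ a, w a ≠ m → m' ≤ w a)
    (h : ∑ d, Q d * (C d).inf' (hC d) (fun a => if w a = m then m' else w a)
      ≤ ∑ a, lam a * if w a = m then m' else w a) :
    ∑ d, Q d * (C d).inf' (hC d) w ≤ ∑ a, lam a * w a := by
  set L := univ.filter (fun a => w a = m)
  set w' : X → ℝ := fun a => if w a = m then m' else w a
  have hle : ∀ a, w a ≤ w' a := fun a => by
    by_cases ha : w a = m
    · simp only [w', if_pos ha, ha, hlt.le]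
    · simp only [w', if_neg ha, le_rfl]
  have hm'w' : ∀ a, m' ≤ w' a := fun a => by
    by_cases ha : w a = m
    · simp only [w', if_pos ha, le_rfl]
    · simpa only [w', if_neg ha] using hm' a ha
  have hstep : ∀ d, Q d * (C d).inf' (hC d) w + (m' - m) * (Q d * if C d ⊆ Lᶜ then 0 else 1)
      ≤ Q d * (C d).inf' (hC d) w' := fun d => by
    have := mul_le_mul_of_nonneg_left (inf'_add_le_inf'_of_le (hC d) hle
      (fun a ha => (mem_filter.1 ha).2.le) hm'w' (L := L)) (hQ d)
    linarith
  have hsum := sum_le_sum fun d (_ : d ∈ univ) => hstep d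
  have hbelief : ∑ d, Q d * (if C d ⊆ Lᶜ then 0 else 1) = ∑ d, Q d - belief C Q Lᶜ := by
    simp only [mul_ite, mul_zero, mul_one, belief, sum_filter, ← sum_sub_distrib]
    exact sum_congr rfl fun d _ => by split_ifs <;> ring
  have hlam : ∑ a, lam a * w' a = ∑ a, lam a * w a + (m' - m) * mass lam L := by
    rw [mass, sum_filter, mul_sum, ← sum_add_distrib]
    refine sum_congr rfl fun a _ => ?_
    by_cases ha : w a = m
    · simp only [w', if_pos ha]
      rw [ha]
      ring
    · simp only [w', if_neg ha]
      ring
  have hsplit : mass lam L + mass lam Lᶜ = ∑ a, lam a := sum_add_sum_compl L lam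
  have hkey : (m' - m) * mass lam L ≤ (m' - m) * (∑ d, Q d - belief C Q Lᶜ) :=
    mul_le_mul_of_nonneg_left (by linarith [hcut Lᶜ]) (sub_nonneg.2 hlt.le)
  rw [sum_add_distrib, ← mul_sum, hbelief] at hsum
  linarith

theorem sum_mul_inf'_le_of_belief_le {C : D → Finset X} (hC : ∀ d, (C d).Nonempty)
    {Q : D → ℝ} {lam : X → ℝ} (hQ : ∀ d, 0 ≤ Q d) (htot : ∑ d, Q d = ∑ a, lam a)
    (hcut : ∀ K, belief C Q K ≤ mass lam K) (w : X → ℝ) :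
    ∑ d, Q d * (C d).inf' (hC d) w ≤ ∑ a, lam a * w a := by
  induction hn : (univ.image w).card using Nat.strong_induction_on generalizing w with
  | _ n ih =>
  cases isEmpty_or_nonempty X
  · have : IsEmpty D := ⟨fun d => (hC d).ne_empty (Subsingleton.elim _ _)⟩
    simp
  obtain ⟨a₀, -, hmin⟩ := univ.exists_min_image w univ_nonempty
  by_cases hconst : ∀ a, w a = w a₀
  · have hinf : ∀ d, (C d).inf' (hC d) w = w a₀ := fun d => by
      rw [show w = fun _ => w a₀ from funext hconst, inf'_const]
    refine le_of_eq ?_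
    calc ∑ d, Q d * (C d).inf' (hC d) w = ∑ a, lam a * w a₀ := by
          simp only [hinf, ← sum_mul, htot]
      _ = ∑ a, lam a * w a := sum_congr rfl fun a _ => by rw [hconst a]
  obtain ⟨b, hb⟩ := not_forall.1 hconst
  obtain ⟨a₁, ha₁, hmin₁⟩ := (univ.filter fun a => w a ≠ w a₀).exists_min_image w
    ⟨b, mem_filter.2 ⟨mem_univ b, hb⟩⟩
  have ha₁ : w a₁ ≠ w a₀ := (mem_filter.1 ha₁).2
  refine sum_mul_inf'_le_of_raise hC hQ htot hcut ((hmin a₁ (mem_univ _)).lt_of_ne ha₁.symm)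
    (fun a ha => hmin₁ a (mem_filter.2 ⟨mem_univ a, ha⟩)) (ih _ ?_ _ rfl)
  refine hn ▸ (card_le_card ?_).trans_lt (card_erase_lt_of_mem (mem_image_of_mem w (mem_univ a₀)))
  intro x hx
  obtain ⟨a, -, rfl⟩ := mem_image.1 hx
  rw [mem_erase]
  split_ifs with ha
  · exact ⟨ha₁, mem_image_of_mem w (mem_univ a₁)⟩
  · exact ⟨ha, mem_image_of_mem w (mem_univ a)⟩

theorem belief_le_mass_of_mem_mixtureSet {C : D → Finset X} {Q : D → ℝ} {lam : X → ℝ}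
    (hQ : ∀ d, 0 ≤ Q d) (h : lam ∈ mixtureSet C Q) (K : Finset X) :
    belief C Q K ≤ mass lam K := by
  obtain ⟨ρ, hρ, rfl⟩ := h
  have hnonneg : ∀ d, 0 ≤ mass (ρ d) K := fun d => sum_nonneg fun a _ => (hρ d trivial).1.1 a
  have hone : ∀ d, C d ⊆ K → mass (ρ d) K = 1 := fun d hd => by
    rw [mass, sum_subset (subset_univ K) fun a _ haK => (hρ d trivial).2 a fun ha => haK (hd ha)]
    exact (hρ d trivial).1.2
  calc belief C Q K = ∑ d ∈ univ.filter (fun d => C d ⊆ K), Q d * mass (ρ d) K :=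
        sum_congr rfl fun d hd => by rw [hone d (mem_filter.1 hd).2, mul_one]
    _ ≤ ∑ d, Q d * mass (ρ d) K :=
        sum_le_sum_of_subset_of_nonneg (filter_subset _ _) fun d _ _ =>
          mul_nonneg (hQ d) (hnonneg d)
    _ = mass (∑ d, Q d • ρ d) K := by
        simp only [mass, mul_sum, Finset.sum_apply, Pi.smul_apply, smul_eq_mul]
        exact sum_comm
    _ = _ := by simp

end Belief

theorem stmt12_general {D : Type*} [Fintype D] (C : D → Finset X)
    (hC : ∀ d, (C d).Nonempty) (lam : X → ℝ) (hlam : IsProb lam)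
    (Q : D → ℝ) (hQ : IsProb Q) :
    (∃ ρ : D → X → ℝ, (∀ d, IsProb (ρ d) ∧ ∀ a ∉ C d, ρ d a = 0) ∧
        ∀ a, lam a = ∑ d, Q d * ρ d a) ↔
      ∀ K : Finset X,
        ∑ d ∈ Finset.univ.filter (fun d => C d ⊆ K), Q d ≤ mass lam K := by
  rw [← mem_mixtureSet_iff]
  exact ⟨belief_le_mass_of_mem_mixtureSet hQ.1, fun hcut =>
    mem_mixtureSet_of_forall_inf'_le hC
      (sum_mul_inf'_le_of_belief_le hC hQ.1 (hQ.2.trans hlam.2.symm) hcut)⟩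

/-- Complete-ignorance rationalizability characterization. -/
theorem stmt12 {D : Type*} [Fintype D] [DecidableEq D] (C : D → Finset X)
    (hC : ∀ d, (C d).Nonempty) (lam : X → ℝ) (hlam : IsProb lam)
    (Q : D → ℝ) (hQ : IsProb Q) :
    (∃ ρ : D → X → ℝ, (∀ d, IsProb (ρ d) ∧ ∀ a ∉ C d, ρ d a = 0) ∧
        ∀ a, lam a = ∑ d, Q d * ρ d a) ↔
      ∀ K : Finset X,
        ∑ d ∈ Finset.univ.filter (fun d => C d ⊆ K), Q d ≤ mass lam K :=
  stmt12_general C hC lam hlam Q hQ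
end

section
/- In the updating model with Ψ = {ψ^κ : κ ∈ 𝒦} a finite set of updating rules indexed by biases κ, and experiments 𝒫_{ψ^κ} = core(ν^κ) with ν^κ(K) = (1−κ)ν(K−{x⁰}) + κ1_{x⁰∈K} for a fixed convex capacity ν: a probability measure Q on Ψ rationalizes λ if and only if for all K ⊆ X, λ(K) ≥ (1−κ_Q)ν(K−{x⁰}) + κ_Q·1_{x⁰∈K}, where κ_Q = Σ_κ Q(ψ^κ)κ is the average bias. Consequently, whether Q rationalizes λ depends only on κ_Q. -/
/-!
Write `ν̃ K = ν (K - x⁰)` and `δ` for the point mass at `x⁰`, so that `ν^κ = (1 - κ) ν̃ + κ δ`.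
If `λ = ∑ Q(ψ^κ) ρ_κ` with `ρ_κ ∈ core ν^κ`, averaging the core inequalities gives
`λ ≥ (1 - κ_Q) ν̃ + κ_Q δ`, since `ν^κ` is affine in `κ`. Conversely, such a `λ` splits as
`λ = (1 - κ_Q) μ + κ_Q δ` with `μ ∈ core ν̃` (take `μ = (λ - κ_Q δ) / (1 - κ_Q)`, or any element
of the core, which is nonempty because `ν̃` is convex, when `κ_Q = 1`), and then
`ρ_κ = (1 - κ) μ + κ δ` lies in `core ν^κ` and averages back to `λ`.
-/

open Finset

variable {X : Type*} [Fintype X] [DecidableEq X]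

/-- Q rationalizes λ in the updating model. -/
def RatUpd {G : Type*} [Fintype G] {I : Type*} [Fintype I]
    (νκ : I → Finset G → ℝ) (Q : I → ℝ) (lam : G → ℝ) : Prop :=
  ∃ ρ : I → G → ℝ, (∀ i, ρ i ∈ core (νκ i)) ∧ ∀ x, lam x = ∑ i, Q i * ρ i x

section

variable {α : Type*}

theorem mass_add (p q : α → ℝ) (s t : ℝ) (K : Finset α) :
    mass (fun x => s * p x + t * q x) K = s * mass p K + t * mass q K := by
  simp only [mass, sum_add_distrib, mul_sum]

theorem mass_single [DecidableEq α] (a : α) (K : Finset α) :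
    mass (Pi.single a 1) K = if a ∈ K then 1 else 0 :=
  sum_pi_single' a 1 K

theorem isProb_single [Fintype α] [DecidableEq α] (a : α) : IsProb (Pi.single a (1 : ℝ)) :=
  ⟨fun b => by by_cases h : b = a <;> simp [h], by simp⟩

theorem single_mem_core [Fintype α] [DecidableEq α] (a : α) :
    Pi.single a 1 ∈ core (fun K : Finset α => if a ∈ K then 1 else 0) :=
  ⟨isProb_single a, fun K => (mass_single a K).ge⟩

theorem mix_mem_core_s17 [Fintype α] {v w : Finset α → ℝ} {p q : α → ℝ}
    (hp : p ∈ core v) (hq : q ∈ core w) {t : ℝ} (ht : t ∈ Set.Icc (0 : ℝ) 1) :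
    (fun x => (1 - t) * p x + t * q x) ∈ core (fun K => (1 - t) * v K + t * w K) := by
  obtain ⟨ht0, ht1⟩ := ht
  refine ⟨⟨fun x => ?_, ?_⟩, fun K => ?_⟩
  · have := hp.1.1 x; have := hq.1.1 x; positivity
  · simpa [mass, hp.1.2, hq.1.2] using mass_add p q (1 - t) t univ
  · rw [mass_add]
    exact add_le_add (mul_le_mul_of_nonneg_left (hp.2 K) (sub_nonneg.2 ht1))
      (mul_le_mul_of_nonneg_left (hq.2 K) ht0)

theorem IsProb.eq_single_of_one_le [Fintype α] [DecidableEq α] {lam : α → ℝ} (hlam : IsProb lam)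
    {a : α} (ha : 1 ≤ lam a) : lam = Pi.single a 1 := by
  have hsplit := add_sum_erase univ lam (mem_univ a)
  have hrest : ∑ x ∈ univ.erase a, lam x = 0 := by
    linarith [sum_nonneg fun x (_ : x ∈ univ.erase a) => hlam.1 x, hlam.2]
  have hlama : lam a = 1 := by linarith [hlam.2]
  rw [sum_eq_zero_iff_of_nonneg fun x _ => hlam.1 x] at hrest
  funext x
  rcases eq_or_ne x a with rfl | hx
  · simpa using hlama
  · simpa [hx] using hrest x (mem_erase.mpr ⟨hx, mem_univ x⟩)

theorem IsCapacity.nonneg_s17 [Fintype α] {w : Finset α → ℝ} (hw : IsCapacity w) (K : Finset α) :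
    0 ≤ w K :=
  hw.1 ▸ hw.2.2 (empty_subset K)

theorem IsConvexCap.comp_image [Fintype α] [DecidableEq α] {β : Type*} [Fintype β]
    [DecidableEq β] {ν : Finset β → ℝ} (hν : IsConvexCap ν) {f : α → β}
    (hf : Function.Bijective f) :
    IsConvexCap (fun K : Finset α => ν (K.image f)) := by
  obtain ⟨⟨hν0, hν1, hmono⟩, hsup⟩ := hν
  refine ⟨⟨by simpa using hν0, ?_, fun A B hAB => hmono (image_subset_image hAB)⟩, fun A B => ?_⟩
  · simpa [image_univ_of_surjective hf.2] using hν1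
  · simpa [image_union, image_inter _ _ hf.1] using hsup (A.image f) (B.image f)

/-- Shapley's greedy construction: add the points of `S` one at a time, giving each the marginal
value of `w`; supermodularity is exactly what makes the result dominate `w`. -/
theorem exists_nonneg_mass_eq_of_supermodular [DecidableEq α] {w : Finset α → ℝ}
    (hw0 : w ∅ = 0) (hmono : Monotone w)
    (hsup : ∀ A B : Finset α, w A + w B ≤ w (A ∪ B) + w (A ∩ B)) (S : Finset α) :
    ∃ p : α → ℝ, (∀ a, 0 ≤ p a) ∧ mass p S = w S ∧ ∀ K ⊆ S, w K ≤ mass p K := by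
  induction S using Finset.induction_on with
  | empty => exact ⟨0, fun _ => le_rfl, by simp [mass, hw0], fun K hK => by
      simp [subset_empty.mp hK, mass, hw0]⟩
  | @insert a S haS ih =>
    obtain ⟨p, hp0, hpS, hpK⟩ := ih
    set p' := Function.update p a (w (insert a S) - w S)
    have hp'a : p' a = w (insert a S) - w S := Function.update_self ..
    have hp'_of_notMem : ∀ T, a ∉ T → mass p' T = mass p T := fun T haT =>
      sum_update_of_notMem haT _ _
    have hp'insert : ∀ T, a ∉ T → mass p' (insert a T) = (w (insert a S) - w S) + mass p' T :=
      fun T haT => by rw [mass, sum_insert haT, hp'a]; rfl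
    refine ⟨p', fun b => ?_, ?_, fun K hK => ?_⟩
    · rcases eq_or_ne b a with rfl | hb
      · simpa [p'] using hmono (subset_insert b S)
      · simpa [p', hb] using hp0 b
    · rw [hp'insert S haS, hp'_of_notMem S haS, hpS]; ring
    · by_cases haK : a ∈ K
      · have hK' : K.erase a ⊆ S := fun b hb =>
          (mem_insert.mp (hK (mem_of_mem_erase hb))).resolve_left (ne_of_mem_erase hb)
        have hunion : K ∪ S = insert a S := by
          conv_lhs => rw [← insert_erase haK, insert_union, union_eq_right.mpr hK']
        have hinter : K ∩ S = K.erase a := by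
          conv_lhs => rw [← insert_erase haK, insert_inter_of_notMem haS, inter_eq_left.mpr hK']
        have hsupK := hsup K S
        rw [hunion, hinter] at hsupK
        rw [← insert_erase haK, hp'insert _ (notMem_erase a K), insert_erase haK,
          hp'_of_notMem _ (fun h => haS (hK' h))]
        linarith [hpK _ hK']
      · have hKS : K ⊆ S := fun b hb =>
          (mem_insert.mp (hK hb)).resolve_left (fun h => haK (h ▸ hb))
        exact (hp'_of_notMem K haK).symm ▸ hpK K hKS

theorem IsConvexCap.core_nonempty_s17 [Fintype α] [DecidableEq α] {w : Finset α → ℝ}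
    (hw : IsConvexCap w) : (core w).Nonempty := by
  obtain ⟨⟨hw0, hw1, hmono⟩, hsup⟩ := hw
  obtain ⟨p, hp0, hpuniv, hp⟩ :=
    exists_nonneg_mass_eq_of_supermodular hw0 (fun _ _ h => hmono h) hsup univ
  exact ⟨p, ⟨hp0, hpuniv.trans hw1⟩, fun K => hp K (subset_univ K)⟩

theorem exists_mem_core_eq_mix [Fintype α] [DecidableEq α] {w : Finset α → ℝ}
    (hw : IsConvexCap w) {lam : α → ℝ} (hlam : IsProb lam) (a : α) {c : ℝ}
    (hc : c ∈ Set.Icc (0 : ℝ) 1)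
    (h : ∀ K, (1 - c) * w K + c * (if a ∈ K then 1 else 0) ≤ mass lam K) :
    ∃ μ ∈ core w, lam = fun x => (1 - c) * μ x + c * (Pi.single a 1 : α → ℝ) x := by
  obtain ⟨hc0, hc1⟩ := hc
  have hca : c ≤ lam a := by
    have := h {a}
    simp only [mem_singleton, if_true, mass, sum_singleton] at this
    nlinarith [hw.1.nonneg_s17 {a}]
  rcases hc1.eq_or_lt with rfl | hc1
  · obtain ⟨μ, hμ⟩ := hw.core_nonempty_s17
    exact ⟨μ, hμ, by simpa using hlam.eq_single_of_one_le hca⟩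
  have hpos : 0 < 1 - c := sub_pos.mpr hc1
  set μ : α → ℝ := fun x => (1 - c)⁻¹ * lam x + (-(1 - c)⁻¹ * c) * (Pi.single a 1 : α → ℝ) x
  have hmassμ : ∀ K, mass μ K = (mass lam K - c * (if a ∈ K then 1 else 0)) / (1 - c) := by
    intro K; rw [mass_add, mass_single]; ring
  refine ⟨μ, ⟨⟨fun x => ?_, ?_⟩, fun K => ?_⟩, ?_⟩
  · have hμx : μ x = (lam x - c * (Pi.single a 1 : α → ℝ) x) / (1 - c) := by
      simp only [μ]; ring
    rw [hμx]
    apply div_nonneg _ hpos.le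
    rcases eq_or_ne x a with rfl | hx
    · simpa using hca
    · simpa [hx] using hlam.1 x
  · have := hmassμ univ
    simp only [mass, mem_univ, if_true, hlam.2] at this
    rw [this, mul_one, div_self hpos.ne']
  · rw [hmassμ, le_div_iff₀ hpos]; linarith [h K]
  · funext x; simp only [μ]; field_simp; ring

theorem sum_mul_affine {I : Type*} [Fintype I] {Q : I → ℝ} (hQ : ∑ i, Q i = 1) (κ : I → ℝ)
    (A B : ℝ) :
    ∑ i, Q i * ((1 - κ i) * A + κ i * B) = (1 - ∑ i, Q i * κ i) * A + (∑ i, Q i * κ i) * B := by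
  simp only [mul_add, ← mul_assoc, mul_sub, mul_one, sum_add_distrib, sum_sub_distrib, ← sum_mul,
    hQ]

theorem RatUpd.sum_mul_le_mass [Fintype α] {I : Type*} [Fintype I] {v : I → Finset α → ℝ}
    {Q : I → ℝ} {lam : α → ℝ} (h : RatUpd v Q lam) (hQ : ∀ i, 0 ≤ Q i) (K : Finset α) :
    ∑ i, Q i * v i K ≤ mass lam K := by
  obtain ⟨ρ, hρ, hlam⟩ := h
  calc ∑ i, Q i * v i K ≤ ∑ i, Q i * mass (ρ i) K :=
        sum_le_sum fun i _ => mul_le_mul_of_nonneg_left ((hρ i).2 K) (hQ i)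
    _ = mass lam K := by simp only [mass, hlam, mul_sum]; exact sum_comm

end

theorem ratUpd_iff {G : Type*} [AddCommGroup G] [Fintype G] [DecidableEq G] (x0 : G)
    {ν : Finset G → ℝ} (hν : IsConvexCap ν) {I : Type*} [Fintype I] {κ : I → ℝ}
    (hκ : ∀ i, κ i ∈ Set.Icc (0:ℝ) 1) {νκ : I → Finset G → ℝ}
    (hνκ : ∀ i (K : Finset G), νκ i K =
      (1 - κ i) * ν (K.image (fun x => x - x0)) + κ i * (if x0 ∈ K then 1 else 0))
    {lam : G → ℝ} (hlam : IsProb lam) {Q : I → ℝ} (hQ : IsProb Q) :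
    RatUpd νκ Q lam ↔
      ∀ K : Finset G,
        (1 - ∑ i, Q i * κ i) * ν (K.image (fun x => x - x0)) +
          (∑ i, Q i * κ i) * (if x0 ∈ K then 1 else 0) ≤ mass lam K := by
  have hmix : ∀ K, ∑ i, Q i * νκ i K = (1 - ∑ i, Q i * κ i) * ν (K.image (fun x => x - x0)) +
      (∑ i, Q i * κ i) * (if x0 ∈ K then 1 else 0) := fun K => by
    simp only [hνκ]; exact sum_mul_affine hQ.2 κ _ _
  refine ⟨fun h K => hmix K ▸ h.sum_mul_le_mass hQ.1 K, fun h => ?_⟩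
  have hν' : IsConvexCap (fun K : Finset G => ν (K.image (fun x => x - x0))) :=
    hν.comp_image (Equiv.subRight x0).bijective
  have hc : ∑ i, Q i * κ i ∈ Set.Icc (0 : ℝ) 1 :=
    ⟨sum_nonneg fun i _ => mul_nonneg (hQ.1 i) (hκ i).1,
      hQ.2 ▸ sum_le_sum fun i _ => mul_le_of_le_one_right (hQ.1 i) (hκ i).2⟩
  obtain ⟨μ, hμ, rfl⟩ := exists_mem_core_eq_mix hν' hlam x0 hc h
  refine ⟨fun i x => (1 - κ i) * μ x + κ i * (Pi.single x0 1 : G → ℝ) x, fun i => ?_, fun x => ?_⟩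
  · simpa only [← hνκ] using mix_mem_core_s17 hμ (single_mem_core x0) (hκ i)
  · exact (sum_mul_affine hQ.2 κ _ _).symm

/-- Rationalizability in the updating model holds iff the inequalities with the
average bias κ_Q hold; consequently rationalizability depends only on κ_Q. -/
theorem stmt17 {G : Type*} [AddCommGroup G] [Fintype G] [DecidableEq G]
    (x0 : G) (ν : Finset G → ℝ) (hν : IsConvexCap ν)
    {I : Type*} [Fintype I] (κ : I → ℝ) (hκ : ∀ i, κ i ∈ Set.Icc (0:ℝ) 1)
    (νκ : I → Finset G → ℝ)
    (hνκ : ∀ i (K : Finset G), νκ i K =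
      (1 - κ i) * ν (K.image (fun x => x - x0)) + κ i * (if x0 ∈ K then 1 else 0))
    (lam : G → ℝ) (hlam : IsProb lam) (Q : I → ℝ) (hQ : IsProb Q) :
    (RatUpd νκ Q lam ↔
      ∀ K : Finset G,
        (1 - ∑ i, Q i * κ i) * ν (K.image (fun x => x - x0)) +
          (∑ i, Q i * κ i) * (if x0 ∈ K then 1 else 0) ≤ mass lam K) ∧
    (∀ Q' : I → ℝ, IsProb Q' → (∑ i, Q' i * κ i) = (∑ i, Q i * κ i) →
      (RatUpd νκ Q lam ↔ RatUpd νκ Q' lam)) := by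
  refine ⟨ratUpd_iff x0 hν hκ hνκ hlam hQ, fun Q' hQ' hsum => ?_⟩
  rw [ratUpd_iff x0 hν hκ hνκ hlam hQ, ratUpd_iff x0 hν hκ hνκ hlam hQ', hsum]
end
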